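/- arXiv:1601.00899 — 6 statements merged into one kernel-verified Lean document; each statement's English description precedes it below -/
import Mathlib

section
/- Fix ε ∈ (0, 1/2). For all real s and p satisfying 0 ≤ s ≤ 1/ε and 0 ≤ p ≤ (1/4)·min{((1 − εs)/(1 − ε))², s²}, one has (1−2ε)²·p / ((1−2ε)²·p + ε(1−2ε)·s + ε²) ≤ (1−2ε)², with equality when p = 1/4 and s = 1. -/
/-- For `ε ∈ (0,1/2)` and admissible `s, p`, the squared maximal correlation
expression is at most `(1−2ε)²`, with equality at `p = 1/4`, `s = 1`. -/
theorem stmt_3 (ε : ℝ) (hε : ε ∈ Set.Ioo (0 : ℝ) (1 / 2)) :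
    (∀ s p : ℝ, 0 ≤ s → s ≤ 1 / ε → 0 ≤ p →
      p ≤ (1 / 4) * min (((1 - ε * s) / (1 - ε)) ^ 2) (s ^ 2) →
      (1 - 2 * ε) ^ 2 * p /
          ((1 - 2 * ε) ^ 2 * p + ε * (1 - 2 * ε) * s + ε ^ 2) ≤
        (1 - 2 * ε) ^ 2) ∧
    (1 - 2 * ε) ^ 2 * (1 / 4) /
        ((1 - 2 * ε) ^ 2 * (1 / 4) + ε * (1 - 2 * ε) * 1 + ε ^ 2) =
      (1 - 2 * ε) ^ 2 := by
  obtain ⟨hε0, hε1⟩ := hε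
  have h1 : (0:ℝ) < 1 - ε := by linarith
  have h2 : (0:ℝ) ≤ 1 - 2 * ε := by linarith
  constructor
  · intro s p hs hs' hp hpm
    have hD : 0 < (1 - 2 * ε) ^ 2 * p + ε * (1 - 2 * ε) * s + ε ^ 2 := by
      have ha : 0 ≤ (1 - 2 * ε) ^ 2 * p := by positivity
      have hb : 0 ≤ ε * (1 - 2 * ε) * s := by positivity
      nlinarith
    rw [div_le_iff₀ hD]
    have hεs : ε * s ≤ 1 := by
      rw [le_div_iff₀ hε0] at hs'
      linarith
    have key : 4 * (1 - ε) * p ≤ (1 - 2 * ε) * s + ε := by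
      rcases le_total s 1 with h | h
      · have hps : p ≤ (1/4) * s ^ 2 :=
          hpm.trans (mul_le_mul_of_nonneg_left (min_le_right _ _) (by norm_num))
        nlinarith [mul_nonneg (sub_nonneg.2 h) (by nlinarith : (0:ℝ) ≤ (1 - ε) * s + ε)]
      · have hps : p ≤ (1/4) * ((1 - ε * s) / (1 - ε)) ^ 2 :=
          hpm.trans (mul_le_mul_of_nonneg_left (min_le_left _ _) (by norm_num))
        have hps' : 4 * (1 - ε) ^ 2 * p ≤ (1 - ε * s) ^ 2 := by
          have hk : ((1 - ε * s) / (1 - ε)) ^ 2 * (1 - ε) ^ 2 = (1 - ε * s) ^ 2 := by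
            field_simp
          nlinarith [mul_le_mul_of_nonneg_left hps (by positivity : (0:ℝ) ≤ 4 * (1 - ε) ^ 2)]
        have hup : (1 - ε * s) ^ 2 ≤ (1 - ε) * ((1 - 2 * ε) * s + ε) := by
          nlinarith [mul_nonneg (sub_nonneg.2 h)
            (by nlinarith : (0:ℝ) ≤ 1 - ε + ε ^ 2 - ε ^ 2 * s)]
        nlinarith
    nlinarith [mul_nonneg (mul_nonneg (sq_nonneg (1 - 2 * ε)) hε0.le)
      (by linarith : (0:ℝ) ≤ (1 - 2 * ε) * s + ε - 4 * (1 - ε) * p)]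
  · rw [show (1 - 2 * ε) ^ 2 * (1 / 4) + ε * (1 - 2 * ε) * 1 + ε ^ 2 = (1/4 : ℝ) by ring]
    field_simp
end

section
/- The function T(x) := x(1−x)·(ln(1−x) − ln x)/((1−x) − x) is strictly monotonically increasing on the interval (0, 1/2). -/
/-!
Write `L(x) = ln(1-x) - ln x`, so that `L' = -1/(x(1-x))`. The quotient rule gives
`T' = H / (1-2x)^2` with `H(x) = (x^2 + (1-x)^2) L(x) - (1-2x)`, and
`H' = -2(1-2x) L - (1-2x)^2/(x(1-x))` is negative on `(0, 1/2)`, where `L > 0`.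
As `H(1/2) = 0`, `H` is positive on `(0, 1/2)`, hence so is `T'`.
-/

open Real Set

noncomputable def T (x : ℝ) : ℝ :=
  x * (1 - x) * (log (1 - x) - log x) / ((1 - x) - x)

noncomputable def H (x : ℝ) : ℝ :=
  (x ^ 2 + (1 - x) ^ 2) * (log (1 - x) - log x) - (1 - 2 * x)

lemma hasDerivAt_log_one_sub_sub_log {x : ℝ} (hx₀ : 0 < x) (hx₁ : x < 1) :
    HasDerivAt (fun y ↦ log (1 - y) - log y) (-1 / (x * (1 - x))) x := by
  have h1 : 1 - x ≠ 0 := by linarith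
  refine ((((hasDerivAt_id' x).const_sub 1).log h1).sub (hasDerivAt_log hx₀.ne')).congr_deriv ?_
  field_simp
  ring

lemma hasDerivAt_H {x : ℝ} (hx₀ : 0 < x) (hx₁ : x < 1) :
    HasDerivAt H
      (-2 * (1 - 2 * x) * (log (1 - x) - log x) - (1 - 2 * x) ^ 2 / (x * (1 - x))) x := by
  have hsq : HasDerivAt (fun y : ℝ ↦ y ^ 2 + (1 - y) ^ 2) (-2 * (1 - 2 * x)) x :=
    (((hasDerivAt_id' x).fun_pow 2).fun_add
      (((hasDerivAt_id' x).const_sub 1).fun_pow 2)).congr_deriv (by simp only [Nat.cast_ofNat, Nat.add_one_sub_one, pow_one]; ring)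
  have hlin : HasDerivAt (fun y : ℝ ↦ 1 - 2 * y) (-2) x :=
    (((hasDerivAt_id' x).const_mul 2).const_sub 1).congr_deriv (by ring)
  refine ((hsq.fun_mul (hasDerivAt_log_one_sub_sub_log hx₀ hx₁)).fun_sub hlin).congr_deriv ?_
  have : 1 - x ≠ 0 := by linarith
  field_simp
  ring

lemma hasDerivAt_T {x : ℝ} (hx₀ : 0 < x) (hx₁ : x < 1) (hx : x ≠ 1 / 2) :
    HasDerivAt T (H x / (1 - 2 * x) ^ 2) x := by
  have hprod : HasDerivAt (fun y : ℝ ↦ y * (1 - y)) (1 - 2 * x) x :=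
    ((hasDerivAt_id' x).fun_mul ((hasDerivAt_id' x).const_sub 1)).congr_deriv (by ring)
  have hden : HasDerivAt (fun y : ℝ ↦ (1 - y) - y) (-2) x :=
    (((hasDerivAt_id' x).const_sub 1).fun_sub (hasDerivAt_id' x)).congr_deriv (by ring)
  have h1x : 1 - x ≠ 0 := by linarith
  have h2x : 1 - 2 * x ≠ 0 := fun h ↦ hx (by linarith)
  refine ((hprod.fun_mul (hasDerivAt_log_one_sub_sub_log hx₀ hx₁)).fun_div hden
    (fun h ↦ hx (by linarith))).congr_deriv ?_
  rw [H, show (1 - x) - x = 1 - 2 * x by ring]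
  field_simp
  ring

lemma log_one_sub_sub_log_pos {x : ℝ} (hx₀ : 0 < x) (hx : x < 1 / 2) :
    0 < log (1 - x) - log x :=
  sub_pos.2 (log_lt_log hx₀ (by linarith))

lemma H_half : H (1 / 2) = 0 := by
  norm_num [H]

lemma strictAntiOn_H : StrictAntiOn H (Ioc 0 (1 / 2)) := by
  refine strictAntiOn_of_deriv_neg (convex_Ioc 0 (1 / 2))
    (fun x hx ↦ (hasDerivAt_H hx.1 (by linarith [hx.2])).continuousAt.continuousWithinAt)
    (fun x hx ↦ ?_)
  rw [interior_Ioc] at hx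
  obtain ⟨hx₀, hx⟩ := hx
  rw [(hasDerivAt_H hx₀ (by linarith)).deriv]
  have hL := log_one_sub_sub_log_pos hx₀ hx
  have h2x : 0 < 1 - 2 * x := by linarith
  have h1x : 0 < 1 - x := by linarith
  have : 0 < (1 - 2 * x) ^ 2 / (x * (1 - x)) := by positivity
  nlinarith

lemma H_pos {x : ℝ} (hx : x ∈ Ioo (0 : ℝ) (1 / 2)) : 0 < H x := by
  rw [← H_half]
  exact strictAntiOn_H ⟨hx.1, hx.2.le⟩ ⟨by norm_num, le_rfl⟩ hx.2

/-- `T(x) := x(1−x)(ln(1−x) − ln x)/((1−x) − x)` is strictly increasing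
on `(0, 1/2)`. -/
theorem stmt_6 :
    StrictMonoOn
      (fun x : ℝ => x * (1 - x) * (Real.log (1 - x) - Real.log x) / ((1 - x) - x))
      (Set.Ioo (0 : ℝ) (1 / 2)) := by
  refine strictMonoOn_of_deriv_pos (convex_Ioo 0 (1 / 2))
    (fun x hx ↦ (hasDerivAt_T hx.1 (by linarith [hx.2]) hx.2.ne).continuousAt.continuousWithinAt) (fun x hx ↦ ?_)
  rw [interior_Ioo] at hx
  show 0 < deriv T x
  rw [(hasDerivAt_T hx.1 (by linarith [hx.2]) hx.2.ne).deriv]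
  have h2x : 0 < 1 - 2 * x := by linarith [hx.2]
  exact div_pos (H_pos hx) (by positivity)
end

section
/- Fix f ∈ (0, 1]. Define ψ(x) := (1 − (1−f)x)·h(fx/(1 − (1−f)x)) for x ∈ (0,1), where h is the binary entropy in nats. Then ψ is twice differentiable on (0,1) and ψ''(x) = −f/(x(1−x)(1 − (1−f)x)) < 0 for all x ∈ (0,1); in particular ψ is strictly concave on (0,1). -/
/-!
Writing `D = 1 - (1 - f) x = f x + (1 - x)`, the grouping property of entropy gives
`ψ x = η (f x) + η (1 - x) - η D` with `η t = -t log t`. As `η' t = -log t - 1` and the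
constants cancel (`f - 1 + (1 - f) = 0`), `ψ' x = -f log (f x) + log (1 - x) - (1 - f) log D`,
and one more differentiation gives `ψ'' x = -f/x - 1/(1 - x) + (1 - f)²/D = -f/(x (1 - x) D)`.
-/

/-- The binary entropy function in nats, with `0 · ln 0 = 0`. -/
noncomputable def binEnt (p : ℝ) : ℝ :=
  -(p * Real.log p) - (1 - p) * Real.log (1 - p)

open Real Set

lemma mul_log_div (a : ℝ) {s : ℝ} (hs : s ≠ 0) : a * log (a / s) = a * log a - a * log s := by
  rcases eq_or_ne a 0 with rfl | ha
  · simp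
  · rw [log_div ha hs]; ring

lemma add_mul_binEnt_div_add (a b : ℝ) :
    (a + b) * binEnt (a / (a + b)) = negMulLog a + negMulLog b - negMulLog (a + b) := by
  rcases eq_or_ne (a + b) 0 with hs | hs
  · obtain rfl : b = -a := by linarith
    simp [negMulLog, log_neg_eq_log]
  · have h1 : 1 - a / (a + b) = b / (a + b) := by field_simp; ring
    simp only [binEnt, h1, negMulLog]
    rw [mul_sub, mul_neg, ← mul_assoc, ← mul_assoc, mul_div_cancel₀ _ hs, mul_div_cancel₀ _ hs,
      mul_log_div a hs, mul_log_div b hs]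
    ring

lemma one_sub_mul_mul_binEnt_eq (f : ℝ) :
    (fun x : ℝ => (1 - (1 - f) * x) * binEnt (f * x / (1 - (1 - f) * x))) =
      fun x => negMulLog (f * x) + negMulLog (1 - x) - negMulLog (1 - (1 - f) * x) := by
  ext x
  have hD : 1 - (1 - f) * x = f * x + (1 - x) := by ring
  rw [hD, add_mul_binEnt_div_add]

lemma HasDerivAt.negMulLog {u : ℝ → ℝ} {u' x : ℝ} (hu : HasDerivAt u u' x) (hx : u x ≠ 0) :
    HasDerivAt (fun y => negMulLog (u y)) (u' * (-Real.log (u x) - 1)) x := by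
  rw [mul_comm]
  exact (hasDerivAt_negMulLog hx).comp x hu

lemma hasDerivAt_negMulLog_add_sub {f x : ℝ} (hfx : f * x ≠ 0) (hx : 1 - x ≠ 0)
    (hD : 1 - (1 - f) * x ≠ 0) :
    HasDerivAt (fun y => negMulLog (f * y) + negMulLog (1 - y) - negMulLog (1 - (1 - f) * y))
      (-f * log (f * x) + log (1 - x) - (1 - f) * log (1 - (1 - f) * x)) x :=
  ((((hasDerivAt_const_mul f).negMulLog hfx).add
    (((hasDerivAt_id' x).const_sub 1).negMulLog hx)).sub
    (((hasDerivAt_const_mul (1 - f)).const_sub 1).negMulLog hD)).congr_deriv (by ring)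

lemma hasDerivAt_log_add_sub {f x : ℝ} (hfx : f * x ≠ 0) (hx : 1 - x ≠ 0)
    (hD : 1 - (1 - f) * x ≠ 0) :
    HasDerivAt (fun y => -f * log (f * y) + log (1 - y) - (1 - f) * log (1 - (1 - f) * y))
      (-f / (x * (1 - x) * (1 - (1 - f) * x))) x := by
  refine (((((hasDerivAt_const_mul f).log hfx).const_mul (-f)).add
    (((hasDerivAt_id' x).const_sub 1).log hx)).sub
    ((((hasDerivAt_const_mul (1 - f)).const_sub 1).log hD).const_mul (1 - f))).congr_deriv ?_
  have hx0 : x ≠ 0 := right_ne_zero_of_mul hfx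
  have hf0 : f ≠ 0 := left_ne_zero_of_mul hfx
  have hD' : 1 - x * (1 - f) ≠ 0 := by rwa [mul_comm]
  field_simp
  ring

/-- For `f ∈ (0,1]`, the function `ψ(x) = (1−(1−f)x) h(fx/(1−(1−f)x))` is twice
differentiable on `(0,1)` with `ψ''(x) = −f/(x(1−x)(1−(1−f)x)) < 0`; in
particular `ψ` is strictly concave on `(0,1)`. -/
theorem stmt_12 (f : ℝ) (hf : f ∈ Set.Ioc (0 : ℝ) 1) :
    (∀ x ∈ Set.Ioo (0 : ℝ) 1,
      DifferentiableAt ℝ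
          (fun x : ℝ => (1 - (1 - f) * x) * binEnt (f * x / (1 - (1 - f) * x))) x ∧
      DifferentiableAt ℝ
          (deriv (fun x : ℝ =>
            (1 - (1 - f) * x) * binEnt (f * x / (1 - (1 - f) * x)))) x ∧
      deriv (deriv (fun x : ℝ =>
            (1 - (1 - f) * x) * binEnt (f * x / (1 - (1 - f) * x)))) x =
        -f / (x * (1 - x) * (1 - (1 - f) * x)) ∧
      deriv (deriv (fun x : ℝ =>
            (1 - (1 - f) * x) * binEnt (f * x / (1 - (1 - f) * x)))) x < 0) ∧
    StrictConcaveOn ℝ (Set.Ioo (0 : ℝ) 1)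
      (fun x : ℝ => (1 - (1 - f) * x) * binEnt (f * x / (1 - (1 - f) * x))) := by
  rw [one_sub_mul_mul_binEnt_eq]
  set ψ := fun y => negMulLog (f * y) + negMulLog (1 - y) - negMulLog (1 - (1 - f) * y)
  have hpos : ∀ x ∈ Ioo (0 : ℝ) 1, 0 < f * x ∧ 0 < 1 - x ∧ 0 < 1 - (1 - f) * x :=
    fun x ⟨hx0, hx1⟩ => ⟨mul_pos hf.1 hx0, by linarith, by linarith [mul_pos hf.1 hx0]⟩
  have hψ' : ∀ x ∈ Ioo (0 : ℝ) 1, HasDerivAt ψ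
      (-f * log (f * x) + log (1 - x) - (1 - f) * log (1 - (1 - f) * x)) x := fun x hx =>
    have ⟨h₁, h₂, h₃⟩ := hpos x hx
    hasDerivAt_negMulLog_add_sub h₁.ne' h₂.ne' h₃.ne'
  have hψ'' : ∀ x ∈ Ioo (0 : ℝ) 1,
      HasDerivAt (deriv ψ) (-f / (x * (1 - x) * (1 - (1 - f) * x))) x := fun x hx =>
    have ⟨h₁, h₂, h₃⟩ := hpos x hx
    (hasDerivAt_log_add_sub h₁.ne' h₂.ne' h₃.ne').congr_of_eventuallyEq <|
      Filter.eventually_of_mem (isOpen_Ioo.mem_nhds hx) fun y hy => (hψ' y hy).deriv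
  have hneg : ∀ x ∈ Ioo (0 : ℝ) 1, -f / (x * (1 - x) * (1 - (1 - f) * x)) < 0 := fun x hx =>
    have ⟨_, h₂, h₃⟩ := hpos x hx
    div_neg_of_neg_of_pos (neg_neg_of_pos hf.1) (mul_pos (mul_pos hx.1 h₂) h₃)
  refine ⟨fun x hx => ⟨(hψ' x hx).differentiableAt, (hψ'' x hx).differentiableAt,
    (hψ'' x hx).deriv, (hψ'' x hx).deriv ▸ hneg x hx⟩, ?_⟩
  refine strictConcaveOn_of_deriv2_neg' (convex_Ioo 0 1) (by fun_prop) fun x hx => ?_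
  rw [Function.iterate_succ_apply', Function.iterate_one, (hψ'' x hx).deriv]
  exact hneg x hx
end

section
/- For all α, f, g ∈ (0, 1/2] (with the coefficient interpreted by continuity as 1 when α = 1/2): (2(1−2α)/ln((1−α)/α))·(h(f) + h(g)) − 8·f(1−f)·g(1−g) ≤ (2(1−2α)/ln((1−α)/α))·(ln 2 + h(α)) − 2α(1−α), where h(p) = −p ln p − (1−p) ln(1−p) is the binary entropy in nats. -/
open Real Set

noncomputable def Lg (x : ℝ) : ℝ := Real.log (1 - x) - Real.log x

lemma hasDerivAt_log1m {x : ℝ} (hx : x < 1) :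
    HasDerivAt (fun y : ℝ => Real.log (1 - y)) (-(1 - x)⁻¹) x := by
  have h : HasDerivAt (fun y : ℝ => 1 - y) (-1) x := by
    simpa using (hasDerivAt_id' x).const_sub (1:ℝ)
  have := (Real.hasDerivAt_log (by linarith : (1:ℝ) - x ≠ 0)).comp x h
  exact this.congr_deriv (by ring)

lemma one_sub_ne {x : ℝ} (hx1 : x < 1) : (1:ℝ) - x ≠ 0 := by
  intro h; rw [sub_eq_zero] at h; exact absurd h.symm (ne_of_lt hx1)

lemma hasDerivAt_Lg {x : ℝ} (hx0 : 0 < x) (hx1 : x < 1) :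
    HasDerivAt Lg (-(1 / (x * (1 - x)))) x := by
  have h := (hasDerivAt_log1m hx1).sub (Real.hasDerivAt_log (ne_of_gt hx0))
  refine h.congr_deriv ?_
  have h1 : x ≠ 0 := ne_of_gt hx0
  have h2 : (1:ℝ) - x ≠ 0 := one_sub_ne hx1
  field_simp
  ring

lemma hasDerivAt_binEnt {x : ℝ} (hx0 : 0 < x) (hx1 : x < 1) :
    HasDerivAt binEnt (Lg x) x := by
  have h1 : HasDerivAt (fun y : ℝ => y * Real.log y) (Real.log x + 1) x := by
    have := (hasDerivAt_id x).mul (Real.hasDerivAt_log (ne_of_gt hx0))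
    refine this.congr_deriv ?_
    have h1 : x ≠ 0 := ne_of_gt hx0
    simp only [id, one_mul, mul_inv_cancel₀ h1]
  have h2 : HasDerivAt (fun y : ℝ => (1 - y) * Real.log (1 - y))
      (-(Real.log (1 - x) + 1)) x := by
    have ha : HasDerivAt (fun y : ℝ => 1 - y) (-1) x := by
      simpa using (hasDerivAt_id' x).const_sub (1:ℝ)
    have hb : HasDerivAt (fun z : ℝ => z * Real.log z) (Real.log (1 - x) + 1) (1 - x) := by
      have h2 : (1:ℝ) - x ≠ 0 := one_sub_ne hx1
      have := (hasDerivAt_id (1 - x)).mul (Real.hasDerivAt_log h2)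
      refine this.congr_deriv ?_
      simp only [id, one_mul, mul_inv_cancel₀ h2]
    have := hb.comp x ha
    refine this.congr_deriv ?_
    ring
  have := (h1.neg).sub h2
  refine this.congr_deriv ?_
  unfold Lg; ring

lemma hd_m (y : ℝ) : HasDerivAt (fun z : ℝ => 1 - 2*z) (-2) y := by
  simpa using ((hasDerivAt_id' y).const_mul (2:ℝ)).const_sub (1:ℝ)

lemma hd_q (y : ℝ) : HasDerivAt (fun z : ℝ => z*(1-z)) (1 - 2*y) y := by
  have := (hasDerivAt_id y).mul ((hasDerivAt_const y (1:ℝ)).sub (hasDerivAt_id y))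
  exact this.congr_deriv (by simp [id]; ring)

lemma antiIcc {F F' : ℝ → ℝ} {a b : ℝ}
    (hd : ∀ y ∈ Icc a b, HasDerivAt F (F' y) y)
    (hs : ∀ y ∈ Ioo a b, F' y ≤ 0) : AntitoneOn F (Icc a b) := by
  apply antitoneOn_of_deriv_nonpos (convex_Icc a b)
  · exact fun y hy => (hd y hy).continuousAt.continuousWithinAt
  · rw [interior_Icc]
    exact fun y hy => (hd y (Ioo_subset_Icc_self hy)).differentiableAt.differentiableWithinAt
  · rw [interior_Icc]
    intro y hy
    rw [(hd y (Ioo_subset_Icc_self hy)).deriv]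
    exact hs y hy

lemma monoIcc {F F' : ℝ → ℝ} {a b : ℝ}
    (hd : ∀ y ∈ Icc a b, HasDerivAt F (F' y) y)
    (hs : ∀ y ∈ Ioo a b, 0 ≤ F' y) : MonotoneOn F (Icc a b) := by
  apply monotoneOn_of_deriv_nonneg (convex_Icc a b)
  · exact fun y hy => (hd y hy).continuousAt.continuousWithinAt
  · rw [interior_Icc]
    exact fun y hy => (hd y (Ioo_subset_Icc_self hy)).differentiableAt.differentiableWithinAt
  · rw [interior_Icc]
    intro y hy
    rw [(hd y (Ioo_subset_Icc_self hy)).deriv]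
    exact hs y hy

lemma sAntiIcc {F F' : ℝ → ℝ} {a b : ℝ}
    (hd : ∀ y ∈ Icc a b, HasDerivAt F (F' y) y)
    (hs : ∀ y ∈ Ioo a b, F' y < 0) : StrictAntiOn F (Icc a b) := by
  apply strictAntiOn_of_deriv_neg (convex_Icc a b)
  · exact fun y hy => (hd y hy).continuousAt.continuousWithinAt
  · rw [interior_Icc]
    intro y hy
    rw [(hd y (Ioo_subset_Icc_self hy)).deriv]
    exact hs y hy

lemma sMonoIcc {F F' : ℝ → ℝ} {a b : ℝ}
    (hd : ∀ y ∈ Icc a b, HasDerivAt F (F' y) y)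
    (hs : ∀ y ∈ Ioo a b, 0 < F' y) : StrictMonoOn F (Icc a b) := by
  apply strictMonoOn_of_deriv_pos (convex_Icc a b)
  · exact fun y hy => (hd y hy).continuousAt.continuousWithinAt
  · rw [interior_Icc]
    intro y hy
    rw [(hd y (Ioo_subset_Icc_self hy)).deriv]
    exact hs y hy

lemma Lg_half : Lg (1/2) = 0 := by unfold Lg; norm_num

lemma binEnt_half : binEnt (1/2) = Real.log 2 := by
  unfold binEnt
  rw [show (1:ℝ) - 1/2 = 1/2 by norm_num, show Real.log (1/2) = - Real.log 2 by
    rw [show (1:ℝ)/2 = 2⁻¹ by norm_num, Real.log_inv]]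
  ring

lemma Lg_pos {x : ℝ} (hx0 : 0 < x) (hx1 : x < 1/2) : 0 < Lg x :=
  sub_pos.2 (Real.log_lt_log hx0 (by linarith))

lemma Lg_nonneg {x : ℝ} (hx : x ∈ Ioc (0:ℝ) (1/2)) : 0 ≤ Lg x := by
  rcases eq_or_lt_of_le hx.2 with h | h
  · rw [h, Lg_half]
  · exact le_of_lt (Lg_pos hx.1 h)

/-- generic: F(1/2)=0, F'≤0 on (0,1/2) ⟹ F ≥ 0 on (0,1/2] -/
lemma nonneg_std {F F' : ℝ → ℝ}
    (hd : ∀ y ∈ Ioo (0:ℝ) 1, HasDerivAt F (F' y) y)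
    (hs : ∀ y ∈ Ioo (0:ℝ) (1/2), F' y ≤ 0)
    (h0 : F (1/2) = 0) {x : ℝ} (hx : x ∈ Ioc (0:ℝ) (1/2)) : 0 ≤ F x := by
  have hA : AntitoneOn F (Icc x (1/2)) := by
    apply antiIcc (F' := F')
    · intro y hy
      exact hd y ⟨lt_of_lt_of_le hx.1 hy.1, lt_of_le_of_lt hy.2 (by norm_num)⟩
    · intro y hy
      exact hs y ⟨lt_trans hx.1 hy.1, hy.2⟩
  have := hA (left_mem_Icc.2 hx.2) (right_mem_Icc.2 hx.2) hx.2
  rw [h0] at this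
  exact this

/-- I1 : 2(1-2x) ≤ Lg x on (0,1/2] -/
lemma I1 {x : ℝ} (hx : x ∈ Ioc (0:ℝ) (1/2)) : 2*(1-2*x) ≤ Lg x := by
  have h := nonneg_std (F := fun y => Lg y - 2*(1-2*y))
      (F' := fun y => -(1/(y*(1-y))) + 4) ?_ ?_ ?_ hx
  · simpa using h
  · intro y hy
    have := (hasDerivAt_Lg hy.1 hy.2).sub ((hd_m y).const_mul 2)
    exact this.congr_deriv (by ring)
  · intro y hy
    have hq : 0 < y*(1-y) := by nlinarith [hy.1, hy.2]
    have h4 : y*(1-y) ≤ 1/4 := by nlinarith [sq_nonneg (1-2*y)]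
    have : 4 ≤ 1/(y*(1-y)) := by
      rw [le_div_iff₀ hq]; linarith
    linarith
  · show Lg (1/2) - 2*(1-2*(1/2)) = 0
    rw [Lg_half]; norm_num

/-- I2 : Lg x ≤ (1-2x)/(2x(1-x)) on (0,1/2] -/
lemma I2 {x : ℝ} (hx : x ∈ Ioc (0:ℝ) (1/2)) : Lg x ≤ (1-2*x)/(2*(x*(1-x))) := by
  have h := nonneg_std (F := fun y => (1-2*y)/(2*(y*(1-y))) - Lg y)
      (F' := fun y => -((1-2*y)^2/(2*(y*(1-y))^2))) ?_ ?_ ?_ hx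
  · simpa using h
  · intro y hy
    have hq : y*(1-y) ≠ 0 := by nlinarith [hy.1, hy.2]
    have h2q : 2*(y*(1-y)) ≠ 0 := by simpa using hq
    have hdiv := ((hd_m y).div ((hd_q y).const_mul 2) h2q).sub (hasDerivAt_Lg hy.1 hy.2)
    apply hdiv.congr_deriv
    field_simp
    ring
  · intro y hy
    have hq : 0 < y*(1-y) := by nlinarith [hy.1, hy.2]
    have h1 : (0:ℝ) ≤ (1-2*y)^2/(2*(y*(1-y))^2) := by positivity
    linarith
  · show (1-2*(1/2:ℝ))/(2*((1/2)*(1-1/2))) - Lg (1/2) = 0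
    rw [Lg_half]; norm_num

/-- M : log 2 - binEnt x ≥ (1-2x)^2/2 on (0,1/2] -/
lemma lemM {x : ℝ} (hx : x ∈ Ioc (0:ℝ) (1/2)) :
    (1-2*x)^2/2 ≤ Real.log 2 - binEnt x := by
  have h := nonneg_std (F := fun y => Real.log 2 - binEnt y - (1-2*y)^2/2)
      (F' := fun y => -Lg y + 2*(1-2*y)) ?_ ?_ ?_ hx
  · simpa using h
  · intro y hy
    have h1 := ((hasDerivAt_binEnt hy.1 hy.2).const_sub (Real.log 2)).sub
      (((hd_m y).pow 2).div_const 2)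
    apply h1.congr_deriv
    ring
  · intro y hy
    show -Lg y + 2*(1-2*y) ≤ 0
    have := I1 ⟨hy.1, le_of_lt hy.2⟩
    linarith
  · show Real.log 2 - binEnt (1/2) - (1-2*(1/2:ℝ))^2/2 = 0
    rw [binEnt_half]; norm_num

/-- series lower bound for Lg -/
lemma I4 {x : ℝ} (hx : x ∈ Ioc (0:ℝ) (1/2)) :
    2*(1-2*x) + (2/3)*(1-2*x)^3 + (2/5)*(1-2*x)^5 ≤ Lg x := by
  have h := nonneg_std
      (F := fun y => Lg y - (2*(1-2*y) + (2/3)*(1-2*y)^3 + (2/5)*(1-2*y)^5))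
      (F' := fun y => -(1/(y*(1-y))) + (4 + 4*(1-2*y)^2 + 4*(1-2*y)^4)) ?_ ?_ ?_ hx
  · simpa using h
  · intro y hy
    have h1 := (hasDerivAt_Lg hy.1 hy.2).sub
      ((((hd_m y).const_mul 2).add (((hd_m y).pow 3).const_mul (2/3))).add
        (((hd_m y).pow 5).const_mul (2/5)))
    apply h1.congr_deriv
    ring
  · intro y hy
    have hq : 0 < y*(1-y) := by nlinarith [hy.1, hy.2]
    have key : (4 + 4*(1-2*y)^2 + 4*(1-2*y)^4) * (y*(1-y)) ≤ 1 := by nlinarith [sq_nonneg ((1-2*y)^3)]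
    have : (4 + 4*(1-2*y)^2 + 4*(1-2*y)^4) ≤ 1/(y*(1-y)) := by
      rw [le_div_iff₀ hq]; linarith
    linarith
  · show Lg (1/2) - (2*(1-2*(1/2:ℝ)) + (2/3)*(1-2*(1/2:ℝ))^3 + (2/5)*(1-2*(1/2:ℝ))^5) = 0
    rw [Lg_half]; norm_num

/-- series lower bound for log2 - binEnt -/
lemma I6 {x : ℝ} (hx : x ∈ Ioc (0:ℝ) (1/2)) :
    (1-2*x)^2/2 + (1-2*x)^4/12 + (1-2*x)^6/30 ≤ Real.log 2 - binEnt x := by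
  have h := nonneg_std
      (F := fun y => Real.log 2 - binEnt y - ((1-2*y)^2/2 + (1-2*y)^4/12 + (1-2*y)^6/30))
      (F' := fun y => -Lg y + (2*(1-2*y) + (2/3)*(1-2*y)^3 + (2/5)*(1-2*y)^5)) ?_ ?_ ?_ hx
  · simpa using h
  · intro y hy
    have h1 := ((hasDerivAt_binEnt hy.1 hy.2).const_sub (Real.log 2)).sub
      (((((hd_m y).pow 2).div_const 2).add (((hd_m y).pow 4).div_const 12)).add
        (((hd_m y).pow 6).div_const 30))
    apply h1.congr_deriv
    ring
  · intro y hy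
    show -Lg y + (2*(1-2*y) + (2/3)*(1-2*y)^3 + (2/5)*(1-2*y)^5) ≤ 0
    have := I4 ⟨hy.1, le_of_lt hy.2⟩
    linarith
  · show Real.log 2 - binEnt (1/2) - ((1-2*(1/2:ℝ))^2/2 + (1-2*(1/2:ℝ))^4/12 + (1-2*(1/2:ℝ))^6/30) = 0
    rw [binEnt_half]; norm_num

/-- series upper bound for Lg on [1/4,1/2] -/
lemma I5 {x : ℝ} (hx : x ∈ Icc (1/4:ℝ) (1/2)) :
    Lg x ≤ 2*(1-2*x) + (2/3)*(1-2*x)^3 + (2/5)*(1-2*x)^5 + (2/5)*(1-2*x)^7 := by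
  have hA : AntitoneOn
      (fun y => (2*(1-2*y) + (2/3)*(1-2*y)^3 + (2/5)*(1-2*y)^5 + (2/5)*(1-2*y)^7) - Lg y)
      (Icc x (1/2)) := by
    apply antiIcc (F' := fun y =>
      -(4 + 4*(1-2*y)^2 + 4*(1-2*y)^4 + (28/5)*(1-2*y)^6) + 1/(y*(1-y)))
    · intro y hy
      have hy0 : 0 < y := lt_of_lt_of_le (by norm_num : (0:ℝ) < 1/4) (le_trans hx.1 hy.1)
      have hy1 : y < 1 := lt_of_le_of_lt hy.2 (by norm_num)
      have h1 := ((((hd_m y).const_mul 2).add (((hd_m y).pow 3).const_mul (2/3))).add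
          (((hd_m y).pow 5).const_mul (2/5))).add (((hd_m y).pow 7).const_mul (2/5))
      have h2 := h1.sub (hasDerivAt_Lg hy0 hy1)
      apply h2.congr_deriv
      ring
    · intro y hy
      have hy4 : 1/4 < y := lt_of_le_of_lt hx.1 hy.1
      have hy2 : y < 1/2 := hy.2
      have hq : 0 < y*(1-y) := by nlinarith
      have hm : (1-2*y)^2 ≤ 2/7 := by nlinarith
      have h8 : (0:ℝ) ≤ (1-2*y)^6 * (2/5 - (7/5)*(1-2*y)^2) :=
        mul_nonneg (by positivity) (by nlinarith)
      have key : 1 ≤ (4 + 4*(1-2*y)^2 + 4*(1-2*y)^4 + (28/5)*(1-2*y)^6) * (y*(1-y)) := by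
        nlinarith [h8]
      have : 1/(y*(1-y)) ≤ 4 + 4*(1-2*y)^2 + 4*(1-2*y)^4 + (28/5)*(1-2*y)^6 := by
        rw [div_le_iff₀ hq]; linarith
      linarith
  have h2 : x ≤ 1/2 := hx.2
  have := hA (left_mem_Icc.2 h2) (right_mem_Icc.2 h2) h2
  have hval : (2*(1-2*(1/2:ℝ)) + (2/3)*(1-2*(1/2:ℝ))^3 + (2/5)*(1-2*(1/2:ℝ))^5
      + (2/5)*(1-2*(1/2:ℝ))^7) - Lg (1/2) = 0 := by rw [Lg_half]; norm_num
  simp only at this hval ⊢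
  linarith

/-- series upper bound for log2 - binEnt on [1/4,1/2] -/
lemma I7 {x : ℝ} (hx : x ∈ Icc (1/4:ℝ) (1/2)) :
    Real.log 2 - binEnt x ≤ (1-2*x)^2/2 + (1-2*x)^4/12 + (1-2*x)^6/30 + (1-2*x)^8/40 := by
  have hA : AntitoneOn
      (fun y => ((1-2*y)^2/2 + (1-2*y)^4/12 + (1-2*y)^6/30 + (1-2*y)^8/40)
        - (Real.log 2 - binEnt y)) (Icc x (1/2)) := by
    apply antiIcc (F' := fun y =>
      -(2*(1-2*y) + (2/3)*(1-2*y)^3 + (2/5)*(1-2*y)^5 + (2/5)*(1-2*y)^7) + Lg y)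
    · intro y hy
      have hy0 : 0 < y := lt_of_lt_of_le (by norm_num : (0:ℝ) < 1/4) (le_trans hx.1 hy.1)
      have hy1 : y < 1 := lt_of_le_of_lt hy.2 (by norm_num)
      have h1 := (((((hd_m y).pow 2).div_const 2).add (((hd_m y).pow 4).div_const 12)).add
          (((hd_m y).pow 6).div_const 30)).add (((hd_m y).pow 8).div_const 40)
      have h2 := h1.sub ((hasDerivAt_binEnt hy0 hy1).const_sub (Real.log 2))
      apply h2.congr_deriv
      ring
    · intro y hy
      have hy4 : (1/4:ℝ) ≤ y := le_trans hx.1 (le_of_lt hy.1)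
      have := I5 ⟨hy4, le_of_lt hy.2⟩
      show -(2*(1-2*y) + (2/3)*(1-2*y)^3 + (2/5)*(1-2*y)^5 + (2/5)*(1-2*y)^7) + Lg y ≤ 0
      linarith
  have h2 : x ≤ 1/2 := hx.2
  have := hA (left_mem_Icc.2 h2) (right_mem_Icc.2 h2) h2
  have hval : ((1-2*(1/2:ℝ))^2/2 + (1-2*(1/2:ℝ))^4/12 + (1-2*(1/2:ℝ))^6/30
      + (1-2*(1/2:ℝ))^8/40) - (Real.log 2 - binEnt (1/2)) = 0 := by
    rw [binEnt_half]; norm_num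
  simp only at this hval ⊢
  linarith

set_option maxHeartbeats 1000000 in
lemma CR2core (m L H : ℝ) (hm0 : 0 ≤ m) (hm2 : m ≤ 1/2)
    (hL1 : 2*m + (2/3)*m^3 + (2/5)*m^5 ≤ L)
    (hL2 : L ≤ 2*m + (2/3)*m^3 + (2/5)*m^5 + (2/5)*m^7)
    (hH2 : H ≤ m^2/2 + m^4/12 + m^6/30 + m^8/40)
    (hH0 : 0 ≤ H) (hLm : 2*m ≤ L) :
    0 ≤ m^2*L^2 - 4*m*L*H - (L - 2*m)^2 := by
  have hL1nn : (0:ℝ) ≤ 2*m + (2/3)*m^3 + (2/5)*m^5 := by positivity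
  have e1 : m^2*(2*m + (2/3)*m^3 + (2/5)*m^5)^2 ≤ m^2*L^2 := by
    have h := mul_self_le_mul_self hL1nn hL1
    nlinarith [sq_nonneg m]
  have e2 : 4*m*L*H ≤ 4*m*((2*m + (2/3)*m^3 + (2/5)*m^5 + (2/5)*m^7)*(m^2/2 + m^4/12 + m^6/30 + m^8/40)) := by
    have hLnn : 0 ≤ L := le_trans (by positivity) hL1
    have l1 : L*H ≤ (2*m + (2/3)*m^3 + (2/5)*m^5 + (2/5)*m^7)*(m^2/2 + m^4/12 + m^6/30 + m^8/40) :=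
      mul_le_mul hL2 hH2 hH0 (by positivity)
    have l2 : (0:ℝ) ≤ 4*m := by linarith
    calc 4*m*L*H = 4*m*(L*H) := by ring
    _ ≤ 4*m*((2*m + (2/3)*m^3 + (2/5)*m^5 + (2/5)*m^7)*(m^2/2 + m^4/12 + m^6/30 + m^8/40)) :=
        mul_le_mul_of_nonneg_left l1 l2
  have e3 : (L - 2*m)^2 ≤ ((2/3)*m^3 + (2/5)*m^5 + (2/5)*m^7)^2 := by
    have h1 : 0 ≤ L - 2*m := by linarith
    have h2 : L - 2*m ≤ (2/3)*m^3 + (2/5)*m^5 + (2/5)*m^7 := by linarith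
    nlinarith [mul_self_le_mul_self h1 h2]
  have hq2 : m^2 ≤ 1/4 := by nlinarith
  have h6 : (0:ℝ) ≤ m^6 := by positivity
  have h8 : (0:ℝ) ≤ m^8 := by positivity
  have h10 : (0:ℝ) ≤ m^10 := by positivity
  have h12 : (0:ℝ) ≤ m^12 := by positivity
  have h14 : (0:ℝ) ≤ m^14 := by positivity
  have pa : m^8 ≤ m^6/4 := by nlinarith
  have pb : m^10 ≤ m^8/4 := by nlinarith
  have pc : m^12 ≤ m^10/4 := by nlinarith
  have pd : m^14 ≤ m^12/4 := by nlinarith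
  have pe : m^16 ≤ m^14/4 := by nlinarith
  have poly : 0 ≤ m^2*(2*m + (2/3)*m^3 + (2/5)*m^5)^2
      - 4*m*((2*m + (2/3)*m^3 + (2/5)*m^5 + (2/5)*m^7)*(m^2/2 + m^4/12 + m^6/30 + m^8/40))
      - ((2/3)*m^3 + (2/5)*m^5 + (2/5)*m^7)^2 := by
    have expand : m^2*(2*m + (2/3)*m^3 + (2/5)*m^5)^2
      - 4*m*((2*m + (2/3)*m^3 + (2/5)*m^5 + (2/5)*m^7)*(m^2/2 + m^4/12 + m^6/30 + m^8/40))
      - ((2/3)*m^3 + (2/5)*m^5 + (2/5)*m^7)^2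
      = (2/9)*m^6 + (2/9)*m^8 - (311/225)*m^10 - (31/75)*m^12 - (19/75)*m^14 - (1/25)*m^16 := by
      ring
    rw [expand]
    linarith [pa, pb, pc, pd, pe, h6, h8, h10, h12, h14]
  linarith [e1, e2, e3, poly]

/-- Region R2 of key lemma C : on [1/4,1/2] -/
lemma CR2 {x : ℝ} (hx : x ∈ Icc (1/4:ℝ) (1/2)) :
    0 ≤ (1-2*x)^2*(Lg x)^2 - 4*(1-2*x)*(Lg x)*(Real.log 2 - binEnt x)
      - (Lg x - 2*(1-2*x))^2 := by
  have hx0 : (0:ℝ) < x := lt_of_lt_of_le (by norm_num) hx.1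
  have hxI : x ∈ Ioc (0:ℝ) (1/2) := ⟨hx0, hx.2⟩
  apply CR2core (1-2*x) (Lg x) (Real.log 2 - binEnt x)
  · linarith [hx.2]
  · linarith [hx.1]
  · exact I4 hxI
  · exact I5 hx
  · exact I7 hx
  · exact le_trans (by positivity) (lemM hxI)
  · exact I1 hxI

noncomputable def sg5 (y : ℝ) : ℝ :=
  2*(1-2*y)*Lg y + 8*(y*(1-y)) + 2*((y*(1-y))*(Lg y)^2) - 3
noncomputable def sg (y : ℝ) : ℝ := 3*Lg y - 4*(1-2*y) - (1-2*y)*(Lg y)^2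
noncomputable def tf (y : ℝ) : ℝ :=
  2*(1-2*y) - 4*((y*(1-y))*Lg y) - (y*(1-y))*(Lg y)^3
noncomputable def om (y : ℝ) : ℝ := (Real.log 2 - binEnt y) + 2*(1-2*y)/Lg y - 1

lemma q_pos {y : ℝ} (h0 : 0 < y) (h1 : y < 1) : 0 < y*(1-y) := by nlinarith

/-- I8 : q L² ≤ m² on (0,1/2] -/
lemma I8 {x : ℝ} (hx : x ∈ Ioc (0:ℝ) (1/2)) :
    (x*(1-x))*(Lg x)^2 ≤ (1-2*x)^2 := by
  have h := nonneg_std (F := fun y => (1-2*y)^2 - (y*(1-y))*(Lg y)^2)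
      (F' := fun y => -4*(1-2*y) - ((1-2*y)*(Lg y)^2 - 2*Lg y)) ?_ ?_ ?_ hx
  · simpa using h
  · intro y hy
    have hLg := hasDerivAt_Lg hy.1 hy.2
    have hq : y*(1-y) ≠ 0 := ne_of_gt (q_pos hy.1 hy.2)
    have h1 := ((hd_m y).pow 2).sub ((hd_q y).mul (hLg.pow 2))
    apply h1.congr_deriv
    have hy0' : y ≠ 0 := ne_of_gt hy.1
    have hy1' : 1 - y ≠ 0 := one_sub_ne hy.2
    simp only [Pi.pow_apply, Nat.cast_ofNat]
    field_simp
    ring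
  · intro y hy
    show -4*(1-2*y) - ((1-2*y)*(Lg y)^2 - 2*Lg y) ≤ 0
    have hy1 : y < 1 := by linarith [hy.2]
    have hq := q_pos hy.1 hy1
    have hL0 : 0 ≤ Lg y := Lg_nonneg ⟨hy.1, le_of_lt hy.2⟩
    have hI1 := I1 ⟨hy.1, le_of_lt hy.2⟩
    have hI2 := I2 ⟨hy.1, le_of_lt hy.2⟩
    have hA2 : 2*(y*(1-y))*Lg y ≤ 1-2*y := by
      rw [le_div_iff₀ (by positivity : (0:ℝ) < 2*(y*(1-y)))] at hI2
      linarith [hI2]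
    -- E = m L (L-2m) + 2(2m - 4qL) ≥ 0 where 4q = 1-m²
    have hm0 : (0:ℝ) ≤ 1-2*y := by linarith [hy.2]
    nlinarith [mul_nonneg (mul_nonneg hm0 hL0) (sub_nonneg.2 hI1), hA2]
  · show (1-2*(1/2:ℝ))^2 - ((1/2)*(1-1/2))*(Lg (1/2))^2 = 0
    rw [Lg_half]; norm_num

lemma hd_sg5 {y : ℝ} (h0 : 0 < y) (h1 : y < 1) :
    HasDerivAt sg5
      (2*(1-2*y)*(Lg y)^2 - 8*Lg y + 8*(1-2*y) - 2*(1-2*y)/(y*(1-y))) y := by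
  have hLg := hasDerivAt_Lg h0 h1
  have hq : y*(1-y) ≠ 0 := ne_of_gt (q_pos h0 h1)
  have h := ((((hd_m y).const_mul 2).mul hLg).add ((hd_q y).const_mul 8)).add
      (((hd_q y).mul (hLg.pow 2)).const_mul 2) |>.sub_const 3
  unfold sg5
  apply h.congr_deriv
  have hy0' : y ≠ 0 := ne_of_gt h0
  have hy1' : 1 - y ≠ 0 := one_sub_ne (by linarith)
  simp only [Pi.pow_apply, Nat.cast_ofNat]
  field_simp
  ring

/-- ς is antitone on (0,1/2) -/
lemma sg5_anti : AntitoneOn sg5 (Ioo (0:ℝ) (1/2)) := by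
  apply antitoneOn_of_deriv_nonpos (convex_Ioo _ _)
  · intro y hy
    exact (hd_sg5 hy.1 (by linarith [hy.2])).continuousAt.continuousWithinAt
  · rw [interior_Ioo]
    intro y hy
    exact (hd_sg5 hy.1 (by linarith [hy.2])).differentiableAt.differentiableWithinAt
  · rw [interior_Ioo]
    intro y hy
    rw [(hd_sg5 hy.1 (by linarith [hy.2])).deriv]
    have hy1 : y < 1 := by linarith [hy.2]
    have hq := q_pos hy.1 hy1
    have hL0 : 0 ≤ Lg y := Lg_nonneg ⟨hy.1, le_of_lt hy.2⟩
    have hI8 := I8 ⟨hy.1, le_of_lt hy.2⟩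
    have hm0 : (0:ℝ) ≤ 1-2*y := by linarith [hy.2]
    -- 2mL² − 8L + 8m − 2m/q ≤ 0 ; multiply by q
    have key : (2*(1-2*y)*(Lg y)^2 - 8*Lg y + 8*(1-2*y))*(y*(1-y)) ≤ 2*(1-2*y) := by
      nlinarith [mul_nonneg hm0 (sub_nonneg.2 hI8), mul_nonneg (le_of_lt hq) hL0]
    have key2 : 2*(1-2*y)*(Lg y)^2 - 8*Lg y + 8*(1-2*y) ≤ 2*(1-2*y)/(y*(1-y)) := by
      rw [le_div_iff₀ hq]; linarith
    linarith

lemma hd_sg {y : ℝ} (h0 : 0 < y) (h1 : y < 1) :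
    HasDerivAt sg (sg5 y / (y*(1-y))) y := by
  have hLg := hasDerivAt_Lg h0 h1
  have hq : y*(1-y) ≠ 0 := ne_of_gt (q_pos h0 h1)
  have h := ((hLg.const_mul 3).sub ((hd_m y).const_mul 4)).sub
      ((hd_m y).mul (hLg.pow 2))
  unfold sg
  apply h.congr_deriv
  have hy0' : y ≠ 0 := ne_of_gt h0
  have hy1' : 1 - y ≠ 0 := one_sub_ne (by linarith)
  simp only [Pi.pow_apply, Nat.cast_ofNat]
  unfold sg5 Lg
  field_simp
  ring

lemma hd_tf {y : ℝ} (h0 : 0 < y) (h1 : y < 1) :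
    HasDerivAt tf (Lg y * sg y) y := by
  have hLg := hasDerivAt_Lg h0 h1
  have hq : y*(1-y) ≠ 0 := ne_of_gt (q_pos h0 h1)
  have h := (((hd_m y).const_mul 2).sub (((hd_q y).mul hLg).const_mul 4)).sub
      ((hd_q y).mul (hLg.pow 3))
  unfold tf
  apply h.congr_deriv
  have hy0' : y ≠ 0 := ne_of_gt h0
  have hy1' : 1 - y ≠ 0 := one_sub_ne (by linarith)
  simp only [Pi.pow_apply, Nat.cast_ofNat]
  unfold sg Lg
  field_simp
  ring

lemma hd_om {y : ℝ} (h0 : 0 < y) (h1 : y < 1/2) :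
    HasDerivAt om (tf y / ((y*(1-y))*(Lg y)^2)) y := by
  have h1' : y < 1 := by linarith
  have hLg := hasDerivAt_Lg h0 h1'
  have hq : y*(1-y) ≠ 0 := ne_of_gt (q_pos h0 h1')
  have hL : Lg y ≠ 0 := ne_of_gt (Lg_pos h0 h1)
  have h := (((hasDerivAt_binEnt h0 h1').const_sub (Real.log 2)).add
      (((hd_m y).const_mul 2).div hLg hL)).sub_const 1
  unfold om
  apply h.congr_deriv
  have hy0' : y ≠ 0 := ne_of_gt h0
  have hy1' : 1 - y ≠ 0 := one_sub_ne (by linarith)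
  unfold tf
  field_simp
  ring

lemma sg_half : sg (1/2) = 0 := by unfold sg; rw [Lg_half]; norm_num

lemma tf_half : tf (1/2) = 0 := by unfold tf; rw [Lg_half]; norm_num

/-- σ : once positive, stays positive (on (0,1/2)) -/
lemma sg_OPSP {w y : ℝ} (hw : w ∈ Ioo (0:ℝ) (1/2)) (hy : y ∈ Ioo (0:ℝ) (1/2))
    (hwy : w ≤ y) (hpos : 0 < sg w) : 0 < sg y := by
  by_cases hc : ∀ v ∈ Icc w y, 0 ≤ sg5 v
  · -- σ monotone on [w,y]
    have hM : MonotoneOn sg (Icc w y) := by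
      apply monoIcc (F' := fun v => sg5 v / (v*(1-v)))
      · intro v hv
        exact hd_sg (lt_of_lt_of_le hw.1 hv.1) (by linarith [hv.2, hy.2])
      · intro v hv
        have hv0 : 0 < v := lt_of_lt_of_le hw.1 (le_of_lt hv.1)
        have hv1 : v < 1 := by linarith [hv.2, hy.2]
        exact div_nonneg (hc v (Ioo_subset_Icc_self hv)) (le_of_lt (q_pos hv0 hv1))
    exact lt_of_lt_of_le hpos (hM (left_mem_Icc.2 hwy) (right_mem_Icc.2 hwy) hwy)
  · push_neg at hc
    obtain ⟨v₀, hv₀, hv₀neg⟩ := hc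
    -- σ strictly antitone on [y,1/2], σ(1/2)=0
    have hA : StrictAntiOn sg (Icc y (1/2)) := by
      apply sAntiIcc (F' := fun v => sg5 v / (v*(1-v)))
      · intro v hv
        exact hd_sg (lt_of_lt_of_le hy.1 hv.1) (by linarith [hv.2])
      · intro v hv
        have hv0 : 0 < v := lt_trans hy.1 hv.1
        have hv1 : v < 1 := by linarith [hv.2]
        apply div_neg_of_neg_of_pos _ (q_pos hv0 hv1)
        have hle : sg5 v ≤ sg5 v₀ := by
          apply sg5_anti ⟨lt_of_lt_of_le hw.1 hv₀.1, lt_of_le_of_lt hv₀.2 hy.2⟩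
            ⟨hv0, hv.2⟩ (le_trans hv₀.2 (le_of_lt hv.1))
        linarith
    have := hA (left_mem_Icc.2 (le_of_lt hy.2)) (right_mem_Icc.2 (le_of_lt hy.2)) hy.2
    rw [sg_half] at this
    linarith

/-- τ : once negative, stays negative (on (0,1/2)) -/
lemma tf_ONSN {z y : ℝ} (hz : z ∈ Ioo (0:ℝ) (1/2)) (hy : y ∈ Ioo (0:ℝ) (1/2))
    (hzy : z ≤ y) (hneg : tf z < 0) : tf y < 0 := by
  by_cases hc : ∃ w ∈ Ioc (0:ℝ) y, 0 < sg w
  · obtain ⟨w, hw, hwpos⟩ := hc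
    -- τ strictly monotone on [y,1/2], τ(1/2)=0
    have hM : StrictMonoOn tf (Icc y (1/2)) := by
      apply sMonoIcc (F' := fun v => Lg v * sg v)
      · intro v hv
        exact hd_tf (lt_of_lt_of_le hy.1 hv.1) (by linarith [hv.2])
      · intro v hv
        have hv0 : 0 < v := lt_trans hy.1 hv.1
        apply mul_pos (Lg_pos hv0 hv.2)
        rcases eq_or_lt_of_le hw.2 with h | h
        · exact sg_OPSP ⟨hw.1, h ▸ hy.2⟩ ⟨hv0, hv.2⟩ (h ▸ le_of_lt hv.1) hwpos
        · exact sg_OPSP ⟨hw.1, lt_trans h hy.2⟩ ⟨hv0, hv.2⟩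
            (le_trans (le_of_lt h) (le_of_lt hv.1)) hwpos
    have := hM (left_mem_Icc.2 (le_of_lt hy.2)) (right_mem_Icc.2 (le_of_lt hy.2)) hy.2
    rw [tf_half] at this
    linarith
  · push_neg at hc
    -- τ antitone on [z,y]
    have hA : AntitoneOn tf (Icc z y) := by
      apply antiIcc (F' := fun v => Lg v * sg v)
      · intro v hv
        exact hd_tf (lt_of_lt_of_le hz.1 hv.1) (by linarith [hv.2, hy.2])
      · intro v hv
        have hv0 : 0 < v := lt_trans hz.1 hv.1
        have hvh : v < 1/2 := lt_of_lt_of_le hv.2 (le_of_lt hy.2)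
        apply mul_nonpos_of_nonneg_of_nonpos (Lg_nonneg ⟨hv0, le_of_lt hvh⟩)
        exact hc v ⟨hv0, le_of_lt hv.2⟩
    have := hA (left_mem_Icc.2 hzy) (right_mem_Icc.2 hzy) hzy
    linarith

/-- ω ≥ min of endpoint values on [a,b] ⊆ (0,1/2) -/
lemma om_min {a b x : ℝ} (ha : a ∈ Ioo (0:ℝ) (1/2)) (hb : b ∈ Ioo (0:ℝ) (1/2))
    (hx : x ∈ Icc a b) : min (om a) (om b) ≤ om x := by
  have hax : a ≤ x := hx.1
  have hxb : x ≤ b := hx.2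
  have hx' : x ∈ Ioo (0:ℝ) (1/2) := ⟨lt_of_lt_of_le ha.1 hax, lt_of_le_of_lt hxb hb.2⟩
  by_cases hc : ∀ v ∈ Icc a x, 0 ≤ tf v
  · have hM : MonotoneOn om (Icc a x) := by
      apply monoIcc (F' := fun v => tf v / ((v*(1-v))*(Lg v)^2))
      · intro v hv
        exact hd_om (lt_of_lt_of_le ha.1 hv.1) (lt_of_le_of_lt hv.2 hx'.2)
      · intro v hv
        have hv0 : 0 < v := lt_trans ha.1 hv.1
        have hvh : v < 1/2 := lt_trans hv.2 hx'.2
        apply div_nonneg (hc v (Ioo_subset_Icc_self hv))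
        have := q_pos hv0 (by linarith : v < 1)
        have := Lg_pos hv0 hvh
        positivity
    have := hM (left_mem_Icc.2 hax) (right_mem_Icc.2 hax) hax
    exact le_trans (min_le_left _ _) this
  · push_neg at hc
    obtain ⟨v₀, hv₀, hv₀neg⟩ := hc
    have hv₀' : v₀ ∈ Ioo (0:ℝ) (1/2) :=
      ⟨lt_of_lt_of_le ha.1 hv₀.1, lt_of_le_of_lt hv₀.2 hx'.2⟩
    have hA : AntitoneOn om (Icc x b) := by
      apply antiIcc (F' := fun v => tf v / ((v*(1-v))*(Lg v)^2))
      · intro v hv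
        exact hd_om (lt_of_lt_of_le hx'.1 hv.1) (lt_of_le_of_lt hv.2 hb.2)
      · intro v hv
        have hv' : v ∈ Ioo (0:ℝ) (1/2) := ⟨lt_trans hx'.1 hv.1, lt_trans hv.2 hb.2⟩
        apply div_nonpos_of_nonpos_of_nonneg
        · exact le_of_lt (tf_ONSN hv₀' hv' (le_trans hv₀.2 (le_of_lt hv.1)) hv₀neg)
        · have := q_pos hv'.1 (by linarith [hv'.2] : v < 1)
          have := Lg_pos hv'.1 hv'.2
          positivity
    have := hA (left_mem_Icc.2 hxb) (right_mem_Icc.2 hxb) hxb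
    exact le_trans (min_le_right _ _) this


noncomputable def Phi (y : ℝ) : ℝ :=
  (1-2*y)^2 - 2*((2*(1-2*y)/Lg y)*(Real.log 2 - binEnt y))
    - (1 - 2*(1-2*y)/Lg y)^2

lemma hd_Phi {y : ℝ} (h0 : 0 < y) (h1 : y < 1/2) :
    HasDerivAt Phi
      (2*((2*(1-2*y)/(y*(1-y)) - 4*Lg y)/(Lg y)^2)
        *(1 - 2*(1-2*y)/Lg y - (Real.log 2 - binEnt y))) y := by
  have h1' : y < 1 := by linarith
  have hLg := hasDerivAt_Lg h0 h1'
  have hq : y*(1-y) ≠ 0 := ne_of_gt (q_pos h0 h1')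
  have hL : Lg y ≠ 0 := ne_of_gt (Lg_pos h0 h1)
  have hc := ((hd_m y).const_mul 2).div hLg hL
  have hH := (hasDerivAt_binEnt h0 h1').const_sub (Real.log 2)
  have h := (((hd_m y).pow 2).sub ((hc.mul hH).const_mul 2)).sub
      (((hasDerivAt_const y (1:ℝ)).sub hc).pow 2)
  unfold Phi
  apply h.congr_deriv
  have hy0' : y ≠ 0 := ne_of_gt h0
  have hy1' : 1 - y ≠ 0 := one_sub_ne (by linarith)
  simp only [Pi.pow_apply, Pi.sub_apply, Pi.div_apply, Nat.cast_ofNat, Nat.reduceSub, pow_one]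
  field_simp
  ring

lemma log54_lb : (1/5:ℝ) ≤ Real.log (5/4) := by
  have := one_sub_inv_le_log_of_pos (show (0:ℝ) < 5/4 by norm_num)
  norm_num at this
  linarith

lemma log54_ub : Real.log (5/4) ≤ 1/4 := by
  have := Real.log_le_sub_one_of_pos (show (0:ℝ) < 5/4 by norm_num)
  linarith

lemma log100_eq : Real.log 100 = 6*Real.log 2 + 2*Real.log (5/4) := by
  rw [show (100:ℝ) = 2^6*(5/4)^2 by norm_num,
    Real.log_mul (by positivity) (by positivity), Real.log_pow, Real.log_pow]
  push_cast; ring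

lemma log100_lb : (4.5588:ℝ) ≤ Real.log 100 := by
  rw [log100_eq]
  have := Real.log_two_gt_d9
  have := log54_lb
  linarith

lemma log100_ub : Real.log 100 ≤ (4.6589:ℝ) := by
  rw [log100_eq]
  have := Real.log_two_lt_d9
  have := log54_ub
  linarith

lemma log99c_lb : -(1/99:ℝ) ≤ Real.log (99/100) := by
  rw [show (99/100:ℝ) = ((100/99:ℝ))⁻¹ by norm_num, Real.log_inv]
  have := Real.log_le_sub_one_of_pos (show (0:ℝ) < 100/99 by norm_num)
  have h2 : (100/99:ℝ) - 1 = 1/99 := by norm_num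
  linarith [this]

lemma log99c_ub : Real.log (99/100) ≤ 0 :=
  Real.log_nonpos (by norm_num) (by norm_num)

lemma log_inv_100 : Real.log (1/100) = -Real.log 100 := by
  rw [show (1/100:ℝ) = (100:ℝ)⁻¹ by norm_num, Real.log_inv]

lemma Lg_100 : Lg (1/100) = Real.log (99/100) + Real.log 100 := by
  unfold Lg
  rw [show (1:ℝ)-1/100 = 99/100 by norm_num, log_inv_100]
  ring

lemma binEnt_100 : binEnt (1/100) =
    Real.log 100/100 - (99/100)*Real.log (99/100) := by
  unfold binEnt
  rw [show (1:ℝ)-1/100 = 99/100 by norm_num, log_inv_100]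
  ring

lemma om_left : 0 ≤ om (1/100) := by
  unfold om
  rw [Lg_100, binEnt_100]
  have h1 := log100_lb
  have h2 := log100_ub
  have h3 := log99c_lb
  have h4 := log99c_ub
  have h5 := Real.log_two_gt_d9
  have hpos : 0 < Real.log (99/100) + Real.log 100 := by linarith
  have hle : Real.log (99/100) + Real.log 100 ≤ 4.6589 := by linarith
  have hdiv : (2*(1-2*(1/100:ℝ)))/4.6589 ≤
      2*(1-2*(1/100:ℝ))/(Real.log (99/100) + Real.log 100) :=
    div_le_div_of_nonneg_left (by norm_num) hpos hle
  have : (0.42070:ℝ) ≤ (2*(1-2*(1/100:ℝ)))/4.6589 := by norm_num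
  linarith

lemma log3_Lg : Lg (1/4) = Real.log 3 := by
  unfold Lg
  rw [show (1:ℝ)-1/4 = 3/4 by norm_num,
    Real.log_div (by norm_num) (by norm_num),
    show (1/4:ℝ) = (4:ℝ)⁻¹ by norm_num, Real.log_inv]
  ring

lemma binEnt_quarter : binEnt (1/4) = 2*Real.log 2 - (3/4)*Real.log 3 := by
  unfold binEnt
  rw [show (1:ℝ)-1/4 = 3/4 by norm_num,
    Real.log_div (show (3:ℝ) ≠ 0 by norm_num) (show (4:ℝ) ≠ 0 by norm_num),
    Real.log_div (show (1:ℝ) ≠ 0 by norm_num) (show (4:ℝ) ≠ 0 by norm_num),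
    Real.log_one, show (4:ℝ) = 2^2 by norm_num, Real.log_pow]
  push_cast; ring

lemma log3_pos : (0:ℝ) < Real.log 3 := Real.log_pos (by norm_num)

lemma om_right : 0 ≤ om (1/4) := by
  unfold om
  rw [log3_Lg, binEnt_quarter]
  have l3 := log3_pos
  have h5 := Real.log_two_lt_d9
  -- goal: log2 - (2 log2 - (3/4) log3) + (1/2·2)/log3 - 1 ≥ 0
  -- i.e. (3/4) l + 1/l ≥ 1 + log 2 ; true since 0.75 l² - 1.6932 l + 1 > 0 always
  have key : 0 < (3/4)*(Real.log 3)^2 - (1 + Real.log 2)*Real.log 3 + 1 := by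
    nlinarith [sq_nonneg (Real.log 3 - 1.12877), h5]
  have key2 : (1 + Real.log 2) < (3/4)*Real.log 3 + 1/Real.log 3 := by
    rw [show (3/4)*Real.log 3 + 1/Real.log 3
        = ((3/4)*(Real.log 3)^2 + 1)/Real.log 3 by field_simp]
    rw [lt_div_iff₀ l3]
    nlinarith [key]
  have : 2*(1-2*(1/4:ℝ)) = 1 := by norm_num
  rw [this]
  linarith [key2]

/-- ω ≥ 0 on [1/100, 1/4] -/
lemma om_on {x : ℝ} (hx : x ∈ Icc (1/100:ℝ) (1/4)) : 0 ≤ om x := by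
  have h := om_min (a := 1/100) (b := 1/4) (by norm_num) (by norm_num) hx
  have := om_left
  have := om_right
  rcases le_total (om (1/100)) (om (1/4)) with h' | h'
  · rw [min_eq_left h'] at h; linarith
  · rw [min_eq_right h'] at h; linarith


/-- conversion : Ψ ≥ 0 → Phi ≥ 0 -/
lemma Phi_of_Psi {x : ℝ} (h0 : 0 < x) (h1 : x < 1/2)
    (hPsi : 0 ≤ (1-2*x)^2*(Lg x)^2 - 4*(1-2*x)*(Lg x)*(Real.log 2 - binEnt x)
      - (Lg x - 2*(1-2*x))^2) : 0 ≤ Phi x := by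
  have hL : 0 < Lg x := Lg_pos h0 h1
  have hmul : Phi x * (Lg x)^2
      = (1-2*x)^2*(Lg x)^2 - 4*(1-2*x)*(Lg x)*(Real.log 2 - binEnt x)
        - (Lg x - 2*(1-2*x))^2 := by
    unfold Phi
    field_simp
    ring
  by_contra hneg
  push_neg at hneg
  have : Phi x * (Lg x)^2 < 0 := mul_neg_of_neg_of_pos hneg (by positivity)
  rw [hmul] at this
  linarith

/-- x*(-log x) ≤ 0.43 for x ∈ (0,1/100] -/
lemma xy_small {x : ℝ} (hx : x ∈ Ioc (0:ℝ) (1/100)) : x*(-Real.log x) ≤ 0.43 := by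
  set y := -Real.log x with hy
  have hxe : x = Real.exp (-y) := by
    rw [hy, neg_neg, Real.exp_log hx.1]
  have hy455 : 4.5486 ≤ y := by
    have h1 : Real.log x ≤ Real.log (1/100) := Real.log_le_log hx.1 hx.2
    rw [log_inv_100] at h1
    have := log100_lb
    rw [hy]; linarith
  have hexp : (1 + y/4)^4 ≤ Real.exp y := by
    have h1 : y/4 + 1 ≤ Real.exp (y/4) := Real.add_one_le_exp _
    have h2 : (0:ℝ) ≤ y/4 + 1 := by linarith
    have h3 : (y/4 + 1)^4 ≤ (Real.exp (y/4))^4 :=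
      pow_le_pow_left₀ h2 h1 4
    have h4 : (Real.exp (y/4))^4 = Real.exp y := by
      rw [← Real.exp_nat_mul]
      congr 1
      ring
    rw [h4] at h3
    calc (1 + y/4)^4 = (y/4 + 1)^4 := by ring
    _ ≤ Real.exp y := h3
  have hpow : (0:ℝ) < (1 + y/4)^4 := by positivity
  have hxle : x ≤ 1/(1 + y/4)^4 := by
    rw [hxe, Real.exp_neg]
    apply inv_anti₀ hpow hexp |>.trans_eq (by rw [one_div])
  have hfin : y/(1 + y/4)^4 ≤ 0.43 := by
    rw [div_le_iff₀ hpow]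
    nlinarith [sq_nonneg (1 - y/4), sq_nonneg y, hy455]
  have hxy : x*y ≤ y/(1 + y/4)^4 := by
    rw [div_eq_mul_inv, mul_comm y]
    apply mul_le_mul_of_nonneg_right _ (by linarith)
    rw [← one_div]
    exact hxle
  linarith

set_option maxHeartbeats 1600000 in
lemma CR0core (x y L h l2 : ℝ) (hx0 : 0 < x) (hx2 : x ≤ 1/100)
    (f1 : (1-x)*L = y - h) (f2 : x*y ≤ h) (f3 : L ≤ y) (f4 : 4.5486 ≤ L)
    (f6 : x*y ≤ 0.43) (hy0 : 0 ≤ y) (hl2 : l2 < 0.6931471808) :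
    0 ≤ (1-2*x)^2*L^2 - 4*(1-2*x)*L*(l2 - h) - (L - 2*(1-2*x))^2 := by
  have hL0 : (0:ℝ) ≤ L := by linarith
  have hm : (98/100:ℝ) ≤ 1-2*x := by linarith
  have hm1 : 1-2*x ≤ 1 := by linarith
  have s1 : 4*L*(1-x)*(x*y) ≤ 4*L*(1-x)*h :=
    mul_le_mul_of_nonneg_left f2 (by nlinarith)
  have s2 : x*L ≤ x*y := mul_le_mul_of_nonneg_left f3 (le_of_lt hx0)
  have s3 : (x*y)*(x*L) ≤ (x*y)*(x*y) :=
    mul_le_mul_of_nonneg_left s2 (mul_nonneg (le_of_lt hx0) hy0)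
  have expand : (1-2*x)^2*L^2 - 4*(1-2*x)*L*(l2 - h) - (L - 2*(1-2*x))^2
      = 4*(1-2*x)*L*(1-l2) - 4*(1-2*x)^2 + 4*L*(1-x)*h - 4*(x*L)*y
        + 4*(x*L)*((y - h) - (1-x)*L) := by
    ring
  rw [expand, f1, sub_self, mul_zero, add_zero]
  have s4 : 4*L*(1-x)*h - 4*(x*L)*y ≥ -4*(x*y)^2 := by nlinarith [s1, s3]
  have hlt : (0.3068528192:ℝ) ≤ 1 - l2 := by linarith
  have p1 : (4.4576:ℝ) ≤ (1-2*x)*L := by nlinarith [hm, f4]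
  have s5 : (1.36:ℝ) ≤ (1-2*x)*L*(1-l2) := by nlinarith [p1, hlt]
  have hm2 : (1-2*x)^2 ≤ 1 := by nlinarith [hm, hm1]
  have hxy0 : 0 ≤ x*y := mul_nonneg (le_of_lt hx0) hy0
  have hxy2 : (x*y)^2 ≤ 0.1849 := by
    nlinarith [mul_le_mul f6 f6 hxy0 (by norm_num : (0:ℝ) ≤ 0.43)]
  nlinarith [s4, s5, hm2, hxy2]

/-- Region R0 : Ψ ≥ 0 on (0,1/100] -/
lemma CR0 {x : ℝ} (hx : x ∈ Ioc (0:ℝ) (1/100)) :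
    0 ≤ (1-2*x)^2*(Lg x)^2 - 4*(1-2*x)*(Lg x)*(Real.log 2 - binEnt x)
      - (Lg x - 2*(1-2*x))^2 := by
  have hx0 := hx.1
  apply CR0core x (-Real.log x) (Lg x) (binEnt x) (Real.log 2) hx0 hx.2
  · unfold Lg binEnt; ring
  · unfold binEnt
    have : (1-x)*Real.log (1-x) ≤ 0 :=
      mul_nonpos_of_nonneg_of_nonpos (by linarith [hx.2])
        (Real.log_nonpos (by linarith [hx.2]) (by linarith [hx.2]))
    nlinarith [this]
  · unfold Lg
    have : Real.log (1-x) ≤ 0 :=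
      Real.log_nonpos (by linarith [hx.2]) (by linarith [hx.2])
    linarith
  · unfold Lg
    have h1 : Real.log x ≤ Real.log (1/100) := Real.log_le_log hx0 hx.2
    rw [log_inv_100] at h1
    have h2 : Real.log (99/100) ≤ Real.log (1-x) :=
      Real.log_le_log (by norm_num) (by linarith [hx.2])
    have := log100_lb
    have := log99c_lb
    linarith
  · have := xy_small hx
    linarith [this]
  · have : Real.log x ≤ 0 := Real.log_nonpos (le_of_lt hx0) (by linarith [hx.2])
    linarith
  · exact Real.log_two_lt_d9


/-- Region R1 : Phi ≥ 0 on [1/100,1/4] -/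
lemma CR1 {x : ℝ} (hx : x ∈ Icc (1/100:ℝ) (1/4)) : 0 ≤ Phi x := by
  have hx0 : (0:ℝ) < x := lt_of_lt_of_le (by norm_num) hx.1
  have hA : AntitoneOn Phi (Icc x (1/4)) := by
    apply antiIcc (F' := fun y =>
      2*((2*(1-2*y)/(y*(1-y)) - 4*Lg y)/(Lg y)^2)
        *(1 - 2*(1-2*y)/Lg y - (Real.log 2 - binEnt y)))
    · intro y hy
      exact hd_Phi (lt_of_lt_of_le hx0 hy.1) (lt_of_le_of_lt hy.2 (by norm_num))
    · intro y hy
      have hy0 : 0 < y := lt_trans hx0 hy.1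
      have hyh : y < 1/2 := lt_of_lt_of_le (lt_of_lt_of_le hy.2 le_rfl) (by norm_num)
      have hy1 : y < 1 := by linarith
      have hq := q_pos hy0 hy1
      have hLp := Lg_pos hy0 hyh
      have hnum : 0 ≤ 2*(1-2*y)/(y*(1-y)) - 4*Lg y := by
        have hI2 := I2 ⟨hy0, le_of_lt hyh⟩
        rw [le_div_iff₀ (by positivity : (0:ℝ) < 2*(y*(1-y)))] at hI2
        rw [sub_nonneg, ← sub_nonneg]
        have : 4*Lg y * (y*(1-y)) ≤ 2*(1-2*y) := by nlinarith [hI2]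
        rw [sub_nonneg, le_div_iff₀ hq]
        linarith
      have hom : 0 ≤ om y := by
        apply om_on
        constructor
        · exact le_trans hx.1 (le_of_lt hy.1)
        · exact le_of_lt hy.2
      have heq : 1 - 2*(1-2*y)/Lg y - (Real.log 2 - binEnt y) = -om y := by
        unfold om; ring
      rw [heq]
      apply mul_nonpos_of_nonneg_of_nonpos
      · positivity
      · linarith
  have h14 : (0:ℝ) ≤ Phi (1/4) := by
    apply Phi_of_Psi (by norm_num) (by norm_num)
    exact CR2 ⟨le_refl _, by norm_num⟩
  have := hA (left_mem_Icc.2 hx.2) (right_mem_Icc.2 hx.2) hx.2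
  linarith

/-- key lemma C : Phi ≥ 0 on (0,1/2) -/
lemma lemC {x : ℝ} (hx : x ∈ Ioo (0:ℝ) (1/2)) : 0 ≤ Phi x := by
  rcases le_or_gt x (1/100) with h | h
  · exact Phi_of_Psi hx.1 hx.2 (CR0 ⟨hx.1, h⟩)
  · rcases le_or_gt x (1/4) with h2 | h2
    · exact CR1 ⟨le_of_lt h, h2⟩
    · exact Phi_of_Psi hx.1 hx.2 (CR2 ⟨le_of_lt h2, le_of_lt hx.2⟩)

/-- L1 : φ is minimized at a on (0,1/2] -/
lemma lemL1 {a x : ℝ} (ha : a ∈ Ioo (0:ℝ) (1/2)) (hx : x ∈ Ioc (0:ℝ) (1/2)) :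
    (2*(1-2*a)/Lg a)*(Real.log 2 - binEnt a) - (1-2*a)^2/2
      ≤ (2*(1-2*a)/Lg a)*(Real.log 2 - binEnt x) - (1-2*x)^2/2 := by
  have hLa := Lg_pos ha.1 ha.2
  have hma : (0:ℝ) < 1-2*a := by linarith [ha.2]
  set G : ℝ → ℝ := fun y => (1-2*y)*Lg a - (1-2*a)*Lg y with hG
  set Gd : ℝ → ℝ := fun y => -2*Lg a + (1-2*a)/(y*(1-y)) with hGd
  have hdG : ∀ y ∈ Ioo (0:ℝ) 1, HasDerivAt G (Gd y) y := by
    intro y hy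
    have hq : y*(1-y) ≠ 0 := ne_of_gt (q_pos hy.1 hy.2)
    have h := ((hd_m y).mul_const (Lg a)).sub ((hasDerivAt_Lg hy.1 hy.2).const_mul (1-2*a))
    apply h.congr_deriv
    simp only [hGd]
    field_simp
    ring
  have hGa : G a = 0 := by simp only [hG]; ring
  have hGhalf : G (1/2) = 0 := by simp only [hG]; rw [Lg_half]; norm_num
  have hGdanti : ∀ y z, y ∈ Ioc (0:ℝ) (1/2) → z ∈ Ioc (0:ℝ) (1/2) → y ≤ z →
      Gd z ≤ Gd y := by
    intro y z hy hz hyz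
    simp only [hGd]
    have hqy := q_pos hy.1 (by linarith [hy.2])
    have hqz := q_pos hz.1 (by linarith [hz.2])
    have hle : y*(1-y) ≤ z*(1-z) := by nlinarith [hy.2, hz.2]
    have := div_le_div_of_nonneg_left (le_of_lt hma) hqy hle
    linarith
  -- (A) : G ≥ 0 on [a, 1/2]
  have hAgeq : ∀ y, a ≤ y → y ≤ 1/2 → 0 ≤ G y := by
    intro y hay hyh
    by_cases hc : ∀ v ∈ Icc a y, 0 ≤ Gd v
    · have hM : MonotoneOn G (Icc a y) := by
        apply monoIcc (F' := Gd)
        · intro v hv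
          exact hdG v ⟨lt_of_lt_of_le ha.1 hv.1, by linarith [hv.2]⟩
        · exact fun v hv => hc v (Ioo_subset_Icc_self hv)
      have := hM (left_mem_Icc.2 hay) (right_mem_Icc.2 hay) hay
      linarith [hGa]
    · push_neg at hc
      obtain ⟨v₀, hv₀, hv₀neg⟩ := hc
      have hv₀' : v₀ ∈ Ioc (0:ℝ) (1/2) :=
        ⟨lt_of_lt_of_le ha.1 hv₀.1, le_trans hv₀.2 hyh⟩
      have hAnt : AntitoneOn G (Icc y (1/2)) := by
        apply antiIcc (F' := Gd)
        · intro v hv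
          exact hdG v ⟨lt_of_lt_of_le ha.1 (le_trans hay hv.1), by linarith [hv.2]⟩
        · intro v hv
          have hv' : v ∈ Ioc (0:ℝ) (1/2) := ⟨lt_of_lt_of_le ha.1 (le_trans hay (le_of_lt hv.1)), le_of_lt hv.2⟩
          have := hGdanti v₀ v hv₀' hv' (le_trans hv₀.2 (le_of_lt hv.1))
          linarith
      have := hAnt (left_mem_Icc.2 hyh) (right_mem_Icc.2 hyh) hyh
      rw [hGhalf] at this
      linarith
  -- (B) : G ≤ 0 on (0, a]
  have hBleq : ∀ y, 0 < y → y ≤ a → G y ≤ 0 := by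
    intro y hy0 hya
    by_contra hpos
    push_neg at hpos
    by_cases hc : ∀ v ∈ Icc y a, 0 ≤ Gd v
    · have hM : MonotoneOn G (Icc y a) := by
        apply monoIcc (F' := Gd)
        · intro v hv
          exact hdG v ⟨lt_of_lt_of_le hy0 hv.1, by linarith [hv.2, ha.2]⟩
        · exact fun v hv => hc v (Ioo_subset_Icc_self hv)
      have := hM (left_mem_Icc.2 hya) (right_mem_Icc.2 hya) hya
      rw [hGa] at this
      linarith
    · push_neg at hc
      obtain ⟨v₀, hv₀, hv₀neg⟩ := hc
      have hv₀' : v₀ ∈ Ioc (0:ℝ) (1/2) :=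
        ⟨lt_of_lt_of_le hy0 hv₀.1, le_of_lt (lt_of_le_of_lt hv₀.2 ha.2)⟩
      have hAnt : StrictAntiOn G (Icc a (1/2)) := by
        apply sAntiIcc (F' := Gd)
        · intro v hv
          exact hdG v ⟨lt_of_lt_of_le ha.1 hv.1, by linarith [hv.2]⟩
        · intro v hv
          have hv' : v ∈ Ioc (0:ℝ) (1/2) := ⟨lt_trans ha.1 hv.1, le_of_lt hv.2⟩
          have := hGdanti v₀ v hv₀' hv' (le_trans hv₀.2 (le_of_lt hv.1))
          linarith
      have := hAnt (left_mem_Icc.2 (le_of_lt ha.2)) (right_mem_Icc.2 (le_of_lt ha.2)) ha.2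
      rw [hGa, hGhalf] at this
      linarith
  -- now monotonicity of φ
  set c := 2*(1-2*a)/Lg a with hc
  have hphi : ∀ y ∈ Ioo (0:ℝ) 1, HasDerivAt
      (fun z => c*(Real.log 2 - binEnt z) - (1-2*z)^2/2)
      ((2/Lg a)*G y) y := by
    intro y hy
    have h := (((hasDerivAt_binEnt hy.1 hy.2).const_sub (Real.log 2)).const_mul c).sub
      (((hd_m y).pow 2).div_const 2)
    apply h.congr_deriv
    simp only [hG, hc]
    field_simp
    ring
  rcases le_total a x with hax | hxa
  · have hM : MonotoneOn (fun z => c*(Real.log 2 - binEnt z) - (1-2*z)^2/2) (Icc a x) := by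
      apply monoIcc (F' := fun y => (2/Lg a)*G y)
      · intro v hv
        exact hphi v ⟨lt_of_lt_of_le ha.1 hv.1, by linarith [hv.2, hx.2]⟩
      · intro v hv
        have : 0 ≤ G v := hAgeq v (le_of_lt hv.1) (by linarith [hv.2, hx.2])
        positivity
    have := hM (left_mem_Icc.2 hax) (right_mem_Icc.2 hax) hax
    simpa using this
  · have hM : AntitoneOn (fun z => c*(Real.log 2 - binEnt z) - (1-2*z)^2/2) (Icc x a) := by
      apply antiIcc (F' := fun y => (2/Lg a)*G y)
      · intro v hv
        exact hphi v ⟨lt_of_lt_of_le hx.1 hv.1, by linarith [hv.2, ha.2]⟩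
      · intro v hv
        have hGv : G v ≤ 0 := hBleq v (lt_of_lt_of_le hx.1 (le_of_lt hv.1)) (le_of_lt hv.2)
        have h2L : 0 ≤ 2/Lg a := by positivity
        exact mul_nonpos_of_nonneg_of_nonpos h2L hGv
    have := hM (left_mem_Icc.2 hxa) (right_mem_Icc.2 hxa) hxa
    simpa using this


set_option maxHeartbeats 2000000 in
/-- For `α, f, g ∈ (0,1/2]`, with coefficient
`c(α) = 2(1−2α)/ln((1−α)/α)` (interpreted by continuity as `1` at `α = 1/2`),
`c(α)(h(f)+h(g)) − 8f(1−f)g(1−g) ≤ c(α)(ln 2 + h(α)) − 2α(1−α)`. -/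
theorem stmt_14 (α f g : ℝ) (hα : α ∈ Set.Ioc (0 : ℝ) (1 / 2))
    (hf : f ∈ Set.Ioc (0 : ℝ) (1 / 2)) (hg : g ∈ Set.Ioc (0 : ℝ) (1 / 2))
    (c : ℝ)
    (hc : c = if α = 1 / 2 then 1 else 2 * (1 - 2 * α) / Real.log ((1 - α) / α)) :
    c * (binEnt f + binEnt g) - 8 * (f * (1 - f)) * (g * (1 - g)) ≤
      c * (Real.log 2 + binEnt α) - 2 * α * (1 - α) := by
  have key : 0 ≤ (c*(Real.log 2 - binEnt f) - (1-2*f)^2/2)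
      + (c*(Real.log 2 - binEnt g) - (1-2*g)^2/2)
      + (1-2*f)^2*(1-2*g)^2/2
      - (c*(Real.log 2 - binEnt α) - (1-2*α)^2/2) := by
    have hMf' := lemM hf
    have hMg' := lemM hg
    have hs0 : (0:ℝ) ≤ (1-2*f)^2 := sq_nonneg _
    have ht0 : (0:ℝ) ≤ (1-2*g)^2 := sq_nonneg _
    rcases eq_or_lt_of_le hα.2 with h12 | h12
    · -- α = 1/2
      subst h12
      rw [if_pos rfl] at hc
      subst hc
      rw [binEnt_half]
      nlinarith [mul_nonneg hs0 ht0]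
    · -- α < 1/2
      have hne : α ≠ 1/2 := ne_of_lt h12
      rw [if_neg hne] at hc
      have hLgeq : Real.log ((1-α)/α) = Lg α := by
        unfold Lg
        exact Real.log_div (by linarith [h12] : (1:ℝ)-α ≠ 0) (ne_of_gt hα.1)
      have hc2 : c = 2*(1-2*α)/Lg α := by rw [hc, hLgeq]
      have hLa := Lg_pos hα.1 h12
      have hma : (0:ℝ) < 1-2*α := by linarith
      have hcpos : 0 < c := by rw [hc2]; positivity
      have hc1 : c ≤ 1 := by
        rw [hc2, div_le_one hLa]
        have := I1 ⟨hα.1, le_of_lt h12⟩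
        linarith
      have hC : (1 - c)^2 ≤ (1-2*α)^2 - 2*(c*(Real.log 2 - binEnt α)) := by
        have h := lemC (x := α) ⟨hα.1, h12⟩
        unfold Phi at h
        rw [← hc2] at h
        linarith
      have hL1f := lemL1 (a := α) (x := f) ⟨hα.1, h12⟩ hf
      have hL1g := lemL1 (a := α) (x := g) ⟨hα.1, h12⟩ hg
      rw [← hc2] at hL1f hL1g
      have hMf : 0 ≤ c*((Real.log 2 - binEnt f) - (1-2*f)^2/2) :=
        mul_nonneg (le_of_lt hcpos) (by linarith)
      have hMg : 0 ≤ c*((Real.log 2 - binEnt g) - (1-2*g)^2/2) :=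
        mul_nonneg (le_of_lt hcpos) (by linarith)
      rcases le_or_gt (1-c) ((1-2*f)^2) with hsE | hsE
      · nlinarith [hL1f, hMg, mul_nonneg (sub_nonneg.2 hsE) ht0]
      · rcases le_or_gt (1-c) ((1-2*g)^2) with htE | htE
        · nlinarith [hL1g, hMf, mul_nonneg (sub_nonneg.2 htE) hs0]
        · have hEs : 0 ≤ (1-c) - (1-2*f)^2 := by linarith
          have hEt : 0 ≤ (1-c) - (1-2*g)^2 := by linarith
          nlinarith [hMf, hMg, hC, mul_nonneg hEs hEt]
  linarith [key]
end

section
/- Let Δ be the standard probability simplex in ℝⁿ (n ≥ 1) and let σ: Δ → ℝ be a concave function that is bounded below (e.g., nonnegative) at every vertex of Δ. Then σ is lower semicontinuous on Δ. -/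
/-!
Near a point `x` of the simplex, every point `y` of the simplex can be written as
`y = (1 - r) • x + r • z` with `z` in the simplex and `r > 0` as small as we like: coordinates
with `x i = 0` impose no constraint, and the others only need `y i` close to `x i`.
Concavity then gives `σ y ≥ (1 - r) σ x + r σ z`, and `σ z` is bounded below by the minimum
principle, since the simplex is the convex hull of its vertices; letting `r → 0` gives
lower semicontinuity at `x`.
-/

open Set Filter Topology AffineMap

lemma ConcaveOn.le_of_mem_stdSimplex {ι : Type*} [Fintype ι] [DecidableEq ι]
    {f : (ι → ℝ) → ℝ} {m : ℝ} (hf : ConcaveOn ℝ (stdSimplex ℝ ι) f)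
    (hm : ∀ i, m ≤ f (Pi.single i 1)) {z : ι → ℝ} (hz : z ∈ stdSimplex ℝ ι) : m ≤ f z := by
  rw [← convexHull_rangle_single_eq_stdSimplex] at hz
  obtain ⟨_, ⟨i, rfl⟩, hi⟩ := hf.exists_le_of_mem_convexHull
    (range_subset_iff.2 (single_mem_stdSimplex ℝ)) hz
  exact (hm i).trans hi

lemma ConcaveOn.lowerSemicontinuousWithinAt_of_homothety_mem_nhdsWithin
    {E : Type*} [AddCommGroup E] [Module ℝ E] [TopologicalSpace E]
    {s : Set E} {f : E → ℝ} {m : ℝ} {x : E} (hf : ConcaveOn ℝ s f)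
    (hm : ∀ z ∈ s, m ≤ f z) (hx : x ∈ s)
    (hnhds : ∀ r ∈ Ioc (0 : ℝ) 1, homothety x r '' s ∈ 𝓝[s] x) :
    LowerSemicontinuousWithinAt f s x := by
  intro t ht
  have hlim : Tendsto (fun r : ℝ ↦ (1 - r) * f x + r * m) (𝓝[>] 0) (𝓝 (f x)) := by
    have : Continuous (fun r : ℝ ↦ (1 - r) * f x + r * m) := by fun_prop
    simpa using (this.tendsto 0).mono_left nhdsWithin_le_nhds
  obtain ⟨r, hr_lt, hr_mem⟩ := ((hlim.eventually (lt_mem_nhds ht)).and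
    (Ioc_mem_nhdsGT zero_lt_one)).exists
  filter_upwards [hnhds r hr_mem] with y ⟨z, hz, hzy⟩
  rw [← hzy, homothety_eq_lineMap, lineMap_apply_module]
  calc t < (1 - r) * f x + r * m := hr_lt
    _ ≤ (1 - r) * f x + r * f z := by gcongr; exacts [hr_mem.1.le, hm z hz]
    _ ≤ f ((1 - r) • x + r • z) :=
      hf.2 hx hz (by linarith [hr_mem.2]) hr_mem.1.le (by ring)

lemma homothety_image_stdSimplex_mem_nhdsWithin {ι : Type*} [Fintype ι] {x : ι → ℝ}
    (hx : x ∈ stdSimplex ℝ ι) {r : ℝ} (hr : 0 < r) :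
    homothety x r '' stdSimplex ℝ ι ∈ 𝓝[stdSimplex ℝ ι] x := by
  have hcoord : ∀ᶠ y in 𝓝[stdSimplex ℝ ι] x, ∀ i, (1 - r) * x i ≤ y i := by
    refine eventually_all.2 fun i ↦ ?_
    rcases (hx.1 i).eq_or_lt with h | h
    · filter_upwards [self_mem_nhdsWithin] with y hy
      rw [← h, mul_zero]
      exact hy.1 i
    · have hlt : (1 - r) * x i < x i := by nlinarith
      filter_upwards [nhdsWithin_le_nhds <|
        ((continuous_apply i).tendsto x).eventually_const_lt hlt] with y hy
      exact hy.le
  filter_upwards [hcoord, self_mem_nhdsWithin] with y hy hyΔ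
  refine ⟨homothety x r⁻¹ y, ⟨fun i ↦ ?_, ?_⟩, ?_⟩
  · have hyi : r⁻¹ * (y i - x i) + x i = r⁻¹ * (y i - (1 - r) * x i) := by
      field_simp
      ring
    simp only [homothety_apply, vsub_eq_sub, vadd_eq_add, Pi.add_apply, Pi.smul_apply,
      Pi.sub_apply, smul_eq_mul, hyi]
    exact mul_nonneg (inv_nonneg.2 hr.le) (by linarith [hy i])
  · simp [homothety_apply, Finset.sum_add_distrib, ← Finset.mul_sum, hx.2, hyΔ.2]
  · rw [← homothety_mul_apply, mul_inv_cancel₀ hr.ne', homothety_one, AffineMap.id_apply]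

theorem stmt_15_general (n : ℕ) (σ : (Fin n → ℝ) → ℝ)
    (hconc : ConcaveOn ℝ (stdSimplex ℝ (Fin n)) σ)
    (hvert : ∀ i : Fin n, 0 ≤ σ (Pi.single i 1)) :
    LowerSemicontinuousOn σ (stdSimplex ℝ (Fin n)) := fun _ hx ↦
  hconc.lowerSemicontinuousWithinAt_of_homothety_mem_nhdsWithin
    (fun _ ↦ hconc.le_of_mem_stdSimplex hvert) hx
    fun _ hr ↦ homothety_image_stdSimplex_mem_nhdsWithin hx hr.1

/-- A concave function on the standard simplex which is nonnegative at every
vertex is lower semicontinuous on the simplex. -/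
theorem stmt_15 (n : ℕ) (hn : 1 ≤ n) (σ : (Fin n → ℝ) → ℝ)
    (hconc : ConcaveOn ℝ (stdSimplex ℝ (Fin n)) σ)
    (hvert : ∀ i : Fin n, 0 ≤ σ (Pi.single i 1)) :
    LowerSemicontinuousOn σ (stdSimplex ℝ (Fin n)) :=
  stmt_15_general n σ hconc hvert
end

section
/- Let Δ be a compact simplex in ℝⁿ and let (f_s)_{s ∈ (0,∞)} be a family of continuous real-valued functions on Δ such that for each x ∈ Δ, s ↦ f_s(x) is nondecreasing in s. Define f(x) := lim_{s↓0} f_s(x) = inf_{s>0} f_s(x), and assume the concave envelope env(f) is finite everywhere on Δ. Then for every x ∈ Δ, env(f)(x) = lim_{s↓0} env(f_s)(x), where env(g) denotes the pointwise smallest concave function dominating g on Δ. -/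
/-!
Concave functions on a polytope are lower semicontinuous: in barycentric coordinates, a point
whose weights dominate `β` times those of `x` is `β • x + (1 - β) • q` for a point `q` of the
polytope, where the concave `φ` is at least `β φ x + (1 - β) min φ`. So for a concave majorant
`φ` of `f`, the upper semicontinuous functions `F s - φ` decrease as `s ↓ 0` to `f - φ ≤ 0`, and
compactness (as in Dini's theorem) yields a single `s₀` with `F s₀ < φ + ε` on the whole simplex.
The envelope being monotone, `env f ≤ env (F s) ≤ env (F s₀) ≤ φ + ε` for `0 < s ≤ s₀`.
-/

/-- The concave envelope of `g` relative to a set `Δ`: the pointwise infimum of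
all concave functions on `Δ` dominating `g` on `Δ`. -/
noncomputable def concaveEnv {n : ℕ} (Δ : Set (Fin n → ℝ))
    (g : (Fin n → ℝ) → ℝ) (x : Fin n → ℝ) : ℝ :=
  sInf {y : ℝ | ∃ φ : (Fin n → ℝ) → ℝ,
    ConcaveOn ℝ Δ φ ∧ (∀ z ∈ Δ, g z ≤ φ z) ∧ y = φ x}

open Filter Set Topology

section StdSimplex

variable {𝕜 ι : Type*} [Field 𝕜] [LinearOrder 𝕜] [IsStrictOrderedRing 𝕜] [Fintype ι]

theorem image_stdSimplex_linearCombination {E : Type*} [AddCommGroup E] [Module 𝕜 E]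
    (v : ι → E) :
    Fintype.linearCombination 𝕜 v '' stdSimplex 𝕜 ι = convexHull 𝕜 (range v) := by
  classical
  rw [← convexHull_rangle_single_eq_stdSimplex, LinearMap.image_convexHull, ← range_comp]
  congr 2
  ext i
  simp [Fintype.linearCombination_apply_single]

theorem exists_mem_stdSimplex_eq_smul_add_smul {w u : ι → 𝕜} (hw : w ∈ stdSimplex 𝕜 ι)
    (hu : u ∈ stdSimplex 𝕜 ι) {β : 𝕜} (hβ : β < 1) (hle : β • w ≤ u) :
    ∃ q ∈ stdSimplex 𝕜 ι, u = β • w + (1 - β) • q := by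
  have hβ' : (1 - β) ≠ 0 := (sub_pos.2 hβ).ne'
  refine ⟨(1 - β)⁻¹ • (u - β • w), ⟨fun i => ?_, ?_⟩, ?_⟩
  · exact smul_nonneg (inv_nonneg.2 (sub_pos.2 hβ).le) (sub_nonneg.2 (hle i))
  · simp [← Finset.mul_sum, Finset.sum_sub_distrib, hu.2, hw.2, hβ']
  · rw [smul_smul, mul_inv_cancel₀ hβ', one_smul, add_sub_cancel]

end StdSimplex

theorem IsCompact.lowerSemicontinuousOn_image {X Y γ : Type*} [TopologicalSpace X]
    [TopologicalSpace Y] [T2Space Y] [LinearOrder γ] {K : Set X} (hK : IsCompact K)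
    {g : X → Y} (hg : ContinuousOn g K) {f : Y → γ} (hf : LowerSemicontinuousOn (f ∘ g) K) :
    LowerSemicontinuousOn f (g '' K) := by
  rw [lowerSemicontinuousOn_iff_preimage_Iic] at hf ⊢
  intro b
  obtain ⟨V, hV, hKV⟩ := hf b
  have hsub : g '' K ∩ f ⁻¹' Iic b = g '' (K ∩ V) := by
    rw [← image_inter_preimage, ← hKV, preimage_comp]
  refine ⟨g '' (K ∩ V),
    ((hK.inter_right hV).image_of_continuousOn (hg.mono inter_subset_left)).isClosed, ?_⟩
  rw [hsub, inter_eq_right.2 (image_mono inter_subset_left)]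

theorem IsCompact.exists_pos_forall_lt_of_semicontinuous {X : Type*} [TopologicalSpace X]
    {K : Set X} (hK : IsCompact K) {F : ℝ → X → ℝ} {g : X → ℝ}
    (hF : ∀ s > 0, UpperSemicontinuousOn (F s) K) (hg : LowerSemicontinuousOn g K)
    (hmono : ∀ x ∈ K, ∀ s t : ℝ, 0 < s → s ≤ t → F s x ≤ F t x)
    (hlt : ∀ x ∈ K, ∃ s > 0, F s x < g x) :
    ∃ s > 0, ∀ x ∈ K, F s x < g x := by
  obtain ⟨s, hs, h⟩ := @IsCompact.induction_on _ _ _ hK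
    (fun S => ∃ s > 0, ∀ x ∈ S, x ∈ K → F s x < g x)
    ⟨1, one_pos, fun _ h => absurd h (notMem_empty _)⟩
    (fun S T hST ⟨s, hs, h⟩ => ⟨s, hs, fun x hx => h x (hST hx)⟩)
    (fun S T ⟨s, hs, hS⟩ ⟨t, ht, hT⟩ => ⟨min s t, lt_min hs ht, fun x hx hxK =>
      hx.elim
        (fun h => (hmono x hxK _ _ (lt_min hs ht) (min_le_left s t)).trans_lt (hS x h hxK))
        (fun h => (hmono x hxK _ _ (lt_min hs ht) (min_le_right s t)).trans_lt (hT x h hxK))⟩)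
    (fun x hx => by
      obtain ⟨s, hs, hsx⟩ := hlt x hx
      obtain ⟨r, hFr, hrg⟩ := exists_between hsx
      exact ⟨{y | F s y < r ∧ r < g y}, (hF s hs x hx r hFr).and (hg x hx r hrg),
        s, hs, fun y hy _ => hy.1.trans hy.2⟩)
  exact ⟨s, hs, fun x hx => h x hx hx⟩

section ConcaveOnPolytope

variable {E : Type*} [AddCommGroup E] [Module ℝ E] {φ : E → ℝ}

theorem ConcaveOn.bddBelow_image_convexHull {s : Set E} (hs : s.Finite)
    (hφ : ConcaveOn ℝ (convexHull ℝ s) φ) : BddBelow (φ '' convexHull ℝ s) := by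
  obtain ⟨m, hm⟩ := (hs.image φ).bddBelow
  refine ⟨m, ?_⟩
  rintro _ ⟨z, hz, rfl⟩
  obtain ⟨y, hy, hyz⟩ := hφ.exists_le_of_mem_convexHull (subset_convexHull ℝ s) hz
  exact (hm (mem_image_of_mem φ hy)).trans hyz

variable {ι : Type*} [Fintype ι] {v : ι → E}

theorem ConcaveOn.lowerSemicontinuousOn_comp_linearCombination
    (hφ : ConcaveOn ℝ (convexHull ℝ (range v)) φ) :
    LowerSemicontinuousOn (φ ∘ Fintype.linearCombination ℝ v) (stdSimplex ℝ ι) := by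
  intro w hw c hc
  set L := Fintype.linearCombination ℝ v
  have hL : ∀ u ∈ stdSimplex ℝ ι, L u ∈ convexHull ℝ (range v) := fun u hu =>
    image_stdSimplex_linearCombination (𝕜 := ℝ) v ▸ mem_image_of_mem L hu
  obtain ⟨m, hm⟩ := hφ.bddBelow_image_convexHull (finite_range v)
  obtain ⟨β, hβc, hβ0, hβ1⟩ : ∃ β : ℝ, c < β * φ (L w) + (1 - β) * m ∧ 0 ≤ β ∧ β < 1 := by
    have hlim : Tendsto (fun β : ℝ => β * φ (L w) + (1 - β) * m) (𝓝[<] 1) (𝓝 (φ (L w))) := by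
      have hcont : Continuous fun β : ℝ => β * φ (L w) + (1 - β) * m := by fun_prop
      simpa using (hcont.tendsto 1).mono_left nhdsWithin_le_nhds
    obtain ⟨β, hβc, hβ⟩ :=
      ((hlim.eventually (lt_mem_nhds hc)).and (Ioo_mem_nhdsLT zero_lt_one)).exists
    exact ⟨β, hβc, hβ.1.le, hβ.2⟩
  have hev : ∀ᶠ u in 𝓝[stdSimplex ℝ ι] w, β • w ≤ u := by
    simp only [Pi.le_def, Pi.smul_apply, smul_eq_mul, eventually_all]
    intro i
    rcases (hw.1 i).eq_or_lt with hwi | hwi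
    · filter_upwards [self_mem_nhdsWithin] with u hu
      simpa [← hwi] using hu.1 i
    · have hcoord : Tendsto (fun u : ι → ℝ => u i) (𝓝[stdSimplex ℝ ι] w) (𝓝 (w i)) :=
        (continuous_apply i).continuousWithinAt
      exact (hcoord.eventually_const_lt (mul_lt_of_lt_one_left hwi hβ1)).mono fun _ h => h.le
  filter_upwards [hev, self_mem_nhdsWithin] with u hwu hu
  obtain ⟨q, hq, rfl⟩ := exists_mem_stdSimplex_eq_smul_add_smul hw hu hβ1 hwu
  calc c < β * φ (L w) + (1 - β) * m := hβc
    _ ≤ β • φ (L w) + (1 - β) • φ (L q) := by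
      have := hm (mem_image_of_mem φ (hL q hq))
      simp only [smul_eq_mul]
      gcongr
    _ ≤ φ (β • L w + (1 - β) • L q) :=
      hφ.2 (hL w hw) (hL q hq) hβ0 (by linarith) (by ring)
    _ = (φ ∘ L) (β • w + (1 - β) • q) := by simp only [Function.comp, map_add, map_smul]

theorem ConcaveOn.lowerSemicontinuousOn_convexHull_range [TopologicalSpace E]
    [IsTopologicalAddGroup E] [ContinuousSMul ℝ E] [T2Space E]
    (hφ : ConcaveOn ℝ (convexHull ℝ (range v)) φ) :
    LowerSemicontinuousOn φ (convexHull ℝ (range v)) := by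
  rw [← image_stdSimplex_linearCombination]
  exact (isCompact_stdSimplex ℝ ι).lowerSemicontinuousOn_image
    (LinearMap.continuous_on_pi _).continuousOn hφ.lowerSemicontinuousOn_comp_linearCombination

end ConcaveOnPolytope

theorem ConcaveOn.exists_pos_forall_lt_add_of_tendsto {E ι : Type*} [AddCommGroup E]
    [Module ℝ E] [TopologicalSpace E] [IsTopologicalAddGroup E] [ContinuousSMul ℝ E] [T2Space E]
    [Fintype ι] {v : ι → E} {F : ℝ → E → ℝ} {f φ : E → ℝ}
    (hcont : ∀ s > 0, ContinuousOn (F s) (convexHull ℝ (range v)))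
    (hmono : ∀ x ∈ convexHull ℝ (range v), ∀ s t : ℝ, 0 < s → s ≤ t → F s x ≤ F t x)
    (hf : ∀ x ∈ convexHull ℝ (range v), Tendsto (fun s => F s x) (𝓝[>] 0) (𝓝 (f x)))
    (hφ : ConcaveOn ℝ (convexHull ℝ (range v)) φ) (hfφ : ∀ z ∈ convexHull ℝ (range v), f z ≤ φ z)
    {ε : ℝ} (hε : 0 < ε) : ∃ s > 0, ∀ z ∈ convexHull ℝ (range v), F s z < φ z + ε :=
  ((finite_range v).isCompact_convexHull ℝ).exists_pos_forall_lt_of_semicontinuous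
    (fun s hs => (hcont s hs).upperSemicontinuousOn)
    (hφ.lowerSemicontinuousOn_convexHull_range.add continuousOn_const.lowerSemicontinuousOn)
    hmono fun z hz => by
      have hlt : f z < φ z + ε := by linarith [hfφ z hz]
      obtain ⟨s, hs, hspos⟩ :=
        ((hf z hz).eventually (gt_mem_nhds hlt)).and self_mem_nhdsWithin |>.exists
      exact ⟨s, hspos, hs⟩

section ConcaveEnvelope

variable {n : ℕ} {g g' φ : (Fin n → ℝ) → ℝ} {x : Fin n → ℝ}

theorem exists_concaveOn_majorant_lt_of_concaveEnv_lt {Δ : Set (Fin n → ℝ)} {b : ℝ}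
    (hg : ∃ φ, ConcaveOn ℝ Δ φ ∧ ∀ z ∈ Δ, g z ≤ φ z) (hb : concaveEnv Δ g x < b) :
    ∃ φ, ConcaveOn ℝ Δ φ ∧ (∀ z ∈ Δ, g z ≤ φ z) ∧ φ x < b := by
  obtain ⟨φ, hφ, hgφ⟩ := hg
  obtain ⟨_, ⟨ψ, hψ, hgψ, rfl⟩, hψb⟩ :=
    exists_lt_of_csInf_lt (by exact ⟨φ x, φ, hφ, hgφ, rfl⟩) hb
  exact ⟨ψ, hψ, hgψ, hψb⟩

variable {s : Set (Fin n → ℝ)}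

theorem bddBelow_setOf_concaveOn_majorant_apply (hs : s.Finite) (hx : x ∈ convexHull ℝ s) :
    BddBelow {y : ℝ | ∃ φ, ConcaveOn ℝ (convexHull ℝ s) φ ∧
      (∀ z ∈ convexHull ℝ s, g z ≤ φ z) ∧ y = φ x} := by
  obtain ⟨m, hm⟩ := (hs.image g).bddBelow
  refine ⟨m, ?_⟩
  rintro _ ⟨φ, hφ, hgφ, rfl⟩
  obtain ⟨y, hy, hyx⟩ := hφ.exists_le_of_mem_convexHull (subset_convexHull ℝ s) hx
  exact (hm (mem_image_of_mem g hy)).trans ((hgφ y (subset_convexHull ℝ s hy)).trans hyx)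

theorem concaveEnv_le (hs : s.Finite) (hx : x ∈ convexHull ℝ s)
    (hφ : ConcaveOn ℝ (convexHull ℝ s) φ) (hgφ : ∀ z ∈ convexHull ℝ s, g z ≤ φ z) :
    concaveEnv (convexHull ℝ s) g x ≤ φ x :=
  csInf_le (bddBelow_setOf_concaveOn_majorant_apply hs hx) ⟨φ, hφ, hgφ, rfl⟩

theorem concaveEnv_mono (hs : s.Finite) (hx : x ∈ convexHull ℝ s)
    (hgg' : ∀ z ∈ convexHull ℝ s, g z ≤ g' z)
    (hg' : ∃ φ, ConcaveOn ℝ (convexHull ℝ s) φ ∧ ∀ z ∈ convexHull ℝ s, g' z ≤ φ z) :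
    concaveEnv (convexHull ℝ s) g x ≤ concaveEnv (convexHull ℝ s) g' x := by
  obtain ⟨φ, hφ, hg'φ⟩ := hg'
  refine le_csInf ⟨φ x, φ, hφ, hg'φ, rfl⟩ ?_
  rintro _ ⟨ψ, hψ, hg'ψ, rfl⟩
  exact concaveEnv_le hs hx hψ fun z hz => (hgg' z hz).trans (hg'ψ z hz)

end ConcaveEnvelope

theorem stmt_16_general (n k : ℕ) (v : Fin (k + 1) → (Fin n → ℝ))
    (Δ : Set (Fin n → ℝ)) (hΔ : Δ = convexHull ℝ (Set.range v))
    (F : ℝ → (Fin n → ℝ) → ℝ)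
    (hcont : ∀ s : ℝ, 0 < s → ContinuousOn (F s) Δ)
    (hmono : ∀ x ∈ Δ, ∀ s t : ℝ, 0 < s → s ≤ t → F s x ≤ F t x)
    (f : (Fin n → ℝ) → ℝ)
    (hf : ∀ x ∈ Δ, Filter.Tendsto (fun s : ℝ => F s x)
      (nhdsWithin 0 (Set.Ioi 0)) (nhds (f x)))
    (henv : ∃ φ : (Fin n → ℝ) → ℝ, ConcaveOn ℝ Δ φ ∧ ∀ z ∈ Δ, f z ≤ φ z) :
    ∀ x ∈ Δ, Filter.Tendsto (fun s : ℝ => concaveEnv Δ (F s) x)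
      (nhdsWithin 0 (Set.Ioi 0)) (nhds (concaveEnv Δ f x)) := by
  subst hΔ
  intro x hx
  have hfin : (range v).Finite := finite_range v
  have hfF : ∀ s > 0, ∀ z ∈ convexHull ℝ (range v), f z ≤ F s z := fun s hs z hz =>
    le_of_tendsto (hf z hz) <| by
      filter_upwards [Ioo_mem_nhdsGT hs] with t ht using hmono z hz t s ht.1 ht.2.le
  have hFmaj : ∀ s > 0, ∃ φ, ConcaveOn ℝ (convexHull ℝ (range v)) φ ∧
      ∀ z ∈ convexHull ℝ (range v), F s z ≤ φ z := fun s hs => by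
    obtain ⟨M, hM⟩ := (hfin.isCompact_convexHull ℝ).bddAbove_image (hcont s hs)
    exact ⟨fun _ => M, concaveOn_const M (convex_convexHull ℝ _),
      fun z hz => hM (mem_image_of_mem _ hz)⟩
  refine tendsto_order.2 ⟨fun a ha => ?_, fun b hb => ?_⟩
  · filter_upwards [self_mem_nhdsWithin] with s hs
    exact ha.trans_le (concaveEnv_mono hfin hx (hfF s hs) (hFmaj s hs))
  · obtain ⟨φ, hφ, hfφ, hφb⟩ := exists_concaveOn_majorant_lt_of_concaveEnv_lt henv hb
    obtain ⟨s₀, hs₀, hFs₀⟩ := hφ.exists_pos_forall_lt_add_of_tendsto hcont hmono hf hfφ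
      (half_pos (sub_pos.2 hφb))
    filter_upwards [Ioc_mem_nhdsGT hs₀] with s hs
    calc concaveEnv _ (F s) x ≤ concaveEnv _ (F s₀) x :=
          concaveEnv_mono hfin hx (fun z hz => hmono z hz s s₀ hs.1 hs.2) (hFmaj s₀ hs₀)
      _ ≤ φ x + (b - φ x) / 2 := concaveEnv_le hfin hx (hφ.add_const _) fun z hz => (hFs₀ z hz).le
      _ < b := by linarith

/-- On a compact simplex `Δ`, if `(F s)_{s>0}` is a family of continuous
functions, nondecreasing in `s`, converging pointwise as `s ↓ 0` to `f`, and
the concave envelope of `f` is finite (i.e. `f` has a finite concave majorant),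
then the concave envelope of `F s` converges pointwise on `Δ` to the concave
envelope of `f` as `s ↓ 0`. -/
theorem stmt_16 (n k : ℕ) (v : Fin (k + 1) → (Fin n → ℝ))
    (hv : AffineIndependent ℝ v)
    (Δ : Set (Fin n → ℝ)) (hΔ : Δ = convexHull ℝ (Set.range v))
    (F : ℝ → (Fin n → ℝ) → ℝ)
    (hcont : ∀ s : ℝ, 0 < s → ContinuousOn (F s) Δ)
    (hmono : ∀ x ∈ Δ, ∀ s t : ℝ, 0 < s → s ≤ t → F s x ≤ F t x)
    (f : (Fin n → ℝ) → ℝ)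
    (hf : ∀ x ∈ Δ, Filter.Tendsto (fun s : ℝ => F s x)
      (nhdsWithin 0 (Set.Ioi 0)) (nhds (f x)))
    (henv : ∃ φ : (Fin n → ℝ) → ℝ, ConcaveOn ℝ Δ φ ∧ ∀ z ∈ Δ, f z ≤ φ z) :
    ∀ x ∈ Δ, Filter.Tendsto (fun s : ℝ => concaveEnv Δ (F s) x)
      (nhdsWithin 0 (Set.Ioi 0)) (nhds (concaveEnv Δ f x)) :=
  stmt_16_general n k v Δ hΔ F hcont hmono f hf henv
end
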